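/- arXiv:math/9905056 — 9 statements merged into one kernel-verified Lean document; each statement's English description precedes it below -/
import Mathlib

section
/- Let H be a Hopf algebra over a field k and A ⊆ H a subalgebra that is a right coideal (Δ(A) ⊆ A ⊗ H). Then the set X of characters χ of H with χ|_A = ε|_A is a subgroup of the group of characters of H under convolution: it contains ε, is closed under convolution, and is closed under χ ↦ χ ∘ S. -/
open TensorProduct Coalgebra HopfAlgebra

section helpers

variable {k H : Type*} [CommSemiring k] [Semiring H]

lemma sum_swap4' {M : Type*} [AddCommMonoid M] {α β : Type*} {γ : α → Type*} {δ : β → Type*}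
    (s : Finset α) (t : (i : α) → Finset (γ i)) (u : Finset β) (v : (j : β) → Finset (δ j))
    (X : (i : α) → γ i → (j : β) → δ j → M) :
    ∑ i ∈ s, ∑ p ∈ t i, ∑ j ∈ u, ∑ q ∈ v j, X i p j q
      = ∑ j ∈ u, ∑ q ∈ v j, ∑ i ∈ s, ∑ p ∈ t i, X i p j q := by
  calc ∑ i ∈ s, ∑ p ∈ t i, ∑ j ∈ u, ∑ q ∈ v j, X i p j q
      = ∑ i ∈ s, ∑ j ∈ u, ∑ p ∈ t i, ∑ q ∈ v j, X i p j q :=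
        Finset.sum_congr rfl fun i _ => Finset.sum_comm
    _ = ∑ j ∈ u, ∑ i ∈ s, ∑ p ∈ t i, ∑ q ∈ v j, X i p j q := Finset.sum_comm
    _ = ∑ j ∈ u, ∑ i ∈ s, ∑ q ∈ v j, ∑ p ∈ t i, X i p j q :=
        Finset.sum_congr rfl fun j _ => Finset.sum_congr rfl fun i _ => Finset.sum_comm
    _ = ∑ j ∈ u, ∑ q ∈ v j, ∑ i ∈ s, ∑ p ∈ t i, X i p j q :=
        Finset.sum_congr rfl fun j _ => Finset.sum_comm

section bialg
variable [Bialgebra k H]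

lemma h3 {ι : Type*} {x : H} (r : Repr k x ι) :
    ∑ i ∈ r.index, counit (R := k) (r.left i) • r.right i = x := by
  calc ∑ i ∈ r.index, counit (R := k) (r.left i) • r.right i
      = TensorProduct.lid k H (∑ i ∈ r.index, counit (R := k) (r.left i) ⊗ₜ[k] r.right i) := by
        rw [map_sum]; simp
    _ = TensorProduct.lid k H (1 ⊗ₜ[k] x) := by rw [Coalgebra.sum_counit_tmul_eq r]
    _ = x := by simp

lemma h4 {ι : Type*} {x : H} (r : Repr k x ι) :
    ∑ i ∈ r.index, counit (R := k) (r.right i) • r.left i = x := by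
  calc ∑ i ∈ r.index, counit (R := k) (r.right i) • r.left i
      = TensorProduct.rid k H (∑ i ∈ r.index, r.left i ⊗ₜ[k] counit (R := k) (r.right i)) := by
        rw [map_sum]; simp
    _ = TensorProduct.rid k H (x ⊗ₜ[k] 1) := by rw [Coalgebra.sum_tmul_counit_eq r]
    _ = x := by simp

/-- product representative -/
noncomputable def mulRepr {ι κ : Type*} {a b : H} (ra : Repr k a ι) (rb : Repr k b κ) :
    Repr k (a * b) (ι × κ) where
  index := ra.index ×ˢ rb.index
  left p := ra.left p.1 * rb.left p.2
  right p := ra.right p.1 * rb.right p.2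
  eq := by
    rw [Finset.sum_product]
    simp_rw [← Algebra.TensorProduct.tmul_mul_tmul]
    rw [← Finset.sum_mul_sum, ra.eq, rb.eq, ← Bialgebra.comul_mul]

lemma coassoc_scalar {ι κ₁ κ₂ : Type*} (f g h : H →ₗ[k] k) (x : H) (r : Repr k x ι)
    (r1 : (i : ι) → Repr k (r.left i) κ₁) (r2 : (i : ι) → Repr k (r.right i) κ₂) :
    ∑ i ∈ r.index, ∑ p ∈ (r2 i).index,
      f (r.left i) * (g ((r2 i).left p) * h ((r2 i).right p))
    = ∑ i ∈ r.index, ∑ p ∈ (r1 i).index,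
      f ((r1 i).left p) * (g ((r1 i).right p) * h (r.right i)) := by
  have := Coalgebra.sum_map_tmul_tmul_eq (R := k) f g h x (repr := r) (a₁ := r1) (a₂ := r2)
  have := congrArg ((LinearMap.mul' k k) ∘ₗ LinearMap.lTensor k (LinearMap.mul' k k)) this
  simpa [map_sum] using this

end bialg

section hopf
variable [HopfAlgebra k H] (χ : H →ₐ[k] k)

lemma h1 {ι : Type*} {x : H} (r : Repr k x ι) :
    ∑ i ∈ r.index, χ (r.left i) * χ (antipode (R := k) (r.right i)) = counit (R := k) x := by
  simp_rw [← map_mul χ, ← map_sum χ, HopfAlgebra.sum_mul_antipode_eq_algebraMap_counit (R := k) r,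
    AlgHom.commutes, Algebra.algebraMap_self_apply]

lemma h2 {ι : Type*} {x : H} (r : Repr k x ι) :
    ∑ i ∈ r.index, χ (antipode (R := k) (r.left i)) * χ (r.right i) = counit (R := k) x := by
  simp_rw [← map_mul χ, ← map_sum χ, HopfAlgebra.sum_antipode_mul_eq_algebraMap_counit (R := k) r,
    AlgHom.commutes, Algebra.algebraMap_self_apply]

lemma h3' {ι : Type*} {x : H} (r : Repr k x ι) :
    ∑ i ∈ r.index, counit (R := k) (r.left i) * χ (antipode (R := k) (r.right i))
      = χ (antipode (R := k) x) := by
  conv_rhs => rw [← h3 r]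
  rw [map_sum, map_sum]
  refine Finset.sum_congr rfl fun i _ => ?_
  rw [LinearMap.map_smul, AlgHom.map_smul_of_tower, smul_eq_mul]

lemma h2mul {ι κ : Type*} {a b : H} (ra : Repr k a ι) (rb : Repr k b κ) :
    ∑ p ∈ ra.index, ∑ q ∈ rb.index,
      χ (antipode (R := k) (ra.left p * rb.left q)) * χ (ra.right p * rb.right q)
      = counit (R := k) (a * b) := by
  have := h2 χ (mulRepr ra rb)
  rw [← this]
  exact (Finset.sum_product (β := k) ra.index rb.index
    (fun z => χ (antipode (R := k) (ra.left z.1 * rb.left z.2)) *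
      χ (ra.right z.1 * rb.right z.2))).symm

end hopf
end helpers

section antimul
variable {k H : Type*} [CommSemiring k] [Semiring H] [HopfAlgebra k H]

local notation "𝒮" => antipode (R := k) (A := H)

lemma chiS_mul (χ : H →ₐ[k] k) (a b : H) :
    χ (𝒮 (a * b)) = χ (𝒮 a) * χ (𝒮 b) := by
  classical
  let ra := ℛ k a; let rb := ℛ k b
  let r1a : (i : H × H) → Repr k (ra.left i) (H × H) := fun i => ℛ k _
  let r2a : (i : H × H) → Repr k (ra.right i) (H × H) := fun i => ℛ k _
  let r1b : (j : H × H) → Repr k (rb.left j) (H × H) := fun j => ℛ k _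
  let r2b : (j : H × H) → Repr k (rb.right j) (H × H) := fun j => ℛ k _
  set T : k := ∑ i ∈ ra.index, ∑ j ∈ rb.index, ∑ p ∈ (r2a i).index, ∑ q ∈ (r2b j).index,
      χ (𝒮 (ra.left i * rb.left j)) *
        ((χ ((r2a i).left p) * χ (𝒮 ((r2a i).right p))) *
          (χ ((r2b j).left q) * χ (𝒮 ((r2b j).right q)))) with hT
  have stepA : T = χ (𝒮 (a * b)) := by
    have e1 : T = ∑ i ∈ ra.index, ∑ j ∈ rb.index,
        χ (𝒮 (ra.left i * rb.left j)) *
          (counit (R := k) (ra.right i) * counit (R := k) (rb.right j)) := by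
      rw [hT]
      refine Finset.sum_congr rfl fun i _ => Finset.sum_congr rfl fun j _ => ?_
      rw [← h1 χ (r2a i), ← h1 χ (r2b j), Finset.sum_mul_sum, Finset.mul_sum]
      refine Finset.sum_congr rfl fun p _ => ?_
      rw [Finset.mul_sum]
    rw [e1]
    conv_rhs => rw [← h4 ra, ← h4 rb, Finset.sum_mul_sum]
    rw [map_sum 𝒮, map_sum χ]
    refine Finset.sum_congr rfl fun i _ => ?_
    rw [map_sum 𝒮, map_sum χ]
    refine Finset.sum_congr rfl fun j _ => ?_
    rw [smul_mul_smul_comm, map_smul, map_smul, smul_eq_mul]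
    ring
  have stepB : T = χ (𝒮 a) * χ (𝒮 b) := by
    have e0 : T = ∑ i ∈ ra.index, ∑ p ∈ (r2a i).index, ∑ j ∈ rb.index, ∑ q ∈ (r2b j).index,
        χ (𝒮 (ra.left i * rb.left j)) *
          ((χ ((r2a i).left p) * χ (𝒮 ((r2a i).right p))) *
            (χ ((r2b j).left q) * χ (𝒮 ((r2b j).right q)))) := by
      rw [hT]; exact Finset.sum_congr rfl fun i _ => Finset.sum_comm
    rw [e0, sum_swap4']
    -- regroup a-factors into coassoc_scalar shape
    have e2 : ∀ j ∈ rb.index, ∀ q ∈ (r2b j).index,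
        ∑ i ∈ ra.index, ∑ p ∈ (r2a i).index,
          χ (𝒮 (ra.left i * rb.left j)) *
            ((χ ((r2a i).left p) * χ (𝒮 ((r2a i).right p))) *
              (χ ((r2b j).left q) * χ (𝒮 ((r2b j).right q))))
        = ∑ i ∈ ra.index, ∑ p ∈ (r1a i).index,
            ((χ.toLinearMap ∘ₗ 𝒮 ∘ₗ LinearMap.mulRight k (rb.left j)) ((r1a i).left p) *
              (χ.toLinearMap ((r1a i).right p) * (χ.toLinearMap ∘ₗ 𝒮) (ra.right i))) *
            (χ ((r2b j).left q) * χ (𝒮 ((r2b j).right q))) := by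
      intro j _ q _
      have lhs_eq : ∑ i ∈ ra.index, ∑ p ∈ (r2a i).index,
          χ (𝒮 (ra.left i * rb.left j)) *
            ((χ ((r2a i).left p) * χ (𝒮 ((r2a i).right p))) *
              (χ ((r2b j).left q) * χ (𝒮 ((r2b j).right q))))
          = (∑ i ∈ ra.index, ∑ p ∈ (r2a i).index,
              (χ.toLinearMap ∘ₗ 𝒮 ∘ₗ LinearMap.mulRight k (rb.left j)) (ra.left i) *
                (χ.toLinearMap ((r2a i).left p) * (χ.toLinearMap ∘ₗ 𝒮) ((r2a i).right p))) *
            (χ ((r2b j).left q) * χ (𝒮 ((r2b j).right q))) := by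
        rw [Finset.sum_mul]
        refine Finset.sum_congr rfl fun i _ => ?_
        rw [Finset.sum_mul]
        refine Finset.sum_congr rfl fun p _ => ?_
        simp only [LinearMap.coe_comp, Function.comp_apply, LinearMap.mulRight_apply,
          AlgHom.toLinearMap_apply]
        ring
      rw [lhs_eq, coassoc_scalar _ _ _ a ra r1a r2a, Finset.sum_mul]
      refine Finset.sum_congr rfl fun i _ => ?_
      rw [Finset.sum_mul]
    rw [Finset.sum_congr rfl fun j hj => Finset.sum_congr rfl fun q hq => e2 j hj q hq]
    -- reorder: bring (i,p) outside
    rw [← sum_swap4']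
    -- regroup b-factors and apply coassoc in b
    have e5 : ∀ i ∈ ra.index, ∀ p ∈ (r1a i).index,
        ∑ j ∈ rb.index, ∑ q ∈ (r2b j).index,
          ((χ.toLinearMap ∘ₗ 𝒮 ∘ₗ LinearMap.mulRight k (rb.left j)) ((r1a i).left p) *
            (χ.toLinearMap ((r1a i).right p) * (χ.toLinearMap ∘ₗ 𝒮) (ra.right i))) *
          (χ ((r2b j).left q) * χ (𝒮 ((r2b j).right q)))
        = ∑ j ∈ rb.index, ∑ q ∈ (r1b j).index,
            ((χ.toLinearMap ∘ₗ 𝒮 ∘ₗ LinearMap.mulLeft k ((r1a i).left p)) ((r1b j).left q) *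
              (χ.toLinearMap ((r1b j).right q) * (χ.toLinearMap ∘ₗ 𝒮) (rb.right j))) *
            (χ.toLinearMap ((r1a i).right p) * (χ.toLinearMap ∘ₗ 𝒮) (ra.right i)) := by
      intro i _ p _
      have lhs_eq : ∑ j ∈ rb.index, ∑ q ∈ (r2b j).index,
          ((χ.toLinearMap ∘ₗ 𝒮 ∘ₗ LinearMap.mulRight k (rb.left j)) ((r1a i).left p) *
            (χ.toLinearMap ((r1a i).right p) * (χ.toLinearMap ∘ₗ 𝒮) (ra.right i))) *
          (χ ((r2b j).left q) * χ (𝒮 ((r2b j).right q)))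
          = (∑ j ∈ rb.index, ∑ q ∈ (r2b j).index,
              (χ.toLinearMap ∘ₗ 𝒮 ∘ₗ LinearMap.mulLeft k ((r1a i).left p)) (rb.left j) *
                (χ.toLinearMap ((r2b j).left q) * (χ.toLinearMap ∘ₗ 𝒮) ((r2b j).right q))) *
            (χ.toLinearMap ((r1a i).right p) * (χ.toLinearMap ∘ₗ 𝒮) (ra.right i)) := by
        rw [Finset.sum_mul]
        refine Finset.sum_congr rfl fun j _ => ?_
        rw [Finset.sum_mul]
        refine Finset.sum_congr rfl fun q _ => ?_
        simp only [LinearMap.coe_comp, Function.comp_apply, LinearMap.mulRight_apply,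
          LinearMap.mulLeft_apply, AlgHom.toLinearMap_apply]
        ring
      rw [lhs_eq, coassoc_scalar _ _ _ b rb r1b r2b, Finset.sum_mul]
      refine Finset.sum_congr rfl fun j _ => ?_
      rw [Finset.sum_mul]
    rw [Finset.sum_congr rfl fun i hi => Finset.sum_congr rfl fun p hp => e5 i hi p hp]
    -- now reorder to (i, j) outer, (p, q) inner, and collapse using h2mul
    have e6 : ∀ i ∈ ra.index,
        ∑ p ∈ (r1a i).index, ∑ j ∈ rb.index, ∑ q ∈ (r1b j).index,
          ((χ.toLinearMap ∘ₗ 𝒮 ∘ₗ LinearMap.mulLeft k ((r1a i).left p)) ((r1b j).left q) *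
            (χ.toLinearMap ((r1b j).right q) * (χ.toLinearMap ∘ₗ 𝒮) (rb.right j))) *
          (χ.toLinearMap ((r1a i).right p) * (χ.toLinearMap ∘ₗ 𝒮) (ra.right i))
        = ∑ j ∈ rb.index,
            (counit (R := k) (ra.left i) * counit (R := k) (rb.left j)) *
              (χ (𝒮 (ra.right i)) * χ (𝒮 (rb.right j))) := by
      intro i _
      rw [Finset.sum_comm]
      refine Finset.sum_congr rfl fun j _ => ?_
      have lhs_eq : ∑ p ∈ (r1a i).index, ∑ q ∈ (r1b j).index,
          ((χ.toLinearMap ∘ₗ 𝒮 ∘ₗ LinearMap.mulLeft k ((r1a i).left p)) ((r1b j).left q) *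
            (χ.toLinearMap ((r1b j).right q) * (χ.toLinearMap ∘ₗ 𝒮) (rb.right j))) *
          (χ.toLinearMap ((r1a i).right p) * (χ.toLinearMap ∘ₗ 𝒮) (ra.right i))
          = (∑ p ∈ (r1a i).index, ∑ q ∈ (r1b j).index,
              χ (𝒮 ((r1a i).left p * (r1b j).left q)) *
                χ ((r1a i).right p * (r1b j).right q)) *
            (χ (𝒮 (ra.right i)) * χ (𝒮 (rb.right j))) := by
        rw [Finset.sum_mul]
        refine Finset.sum_congr rfl fun p _ => ?_
        rw [Finset.sum_mul]
        refine Finset.sum_congr rfl fun q _ => ?_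
        simp only [LinearMap.coe_comp, Function.comp_apply, LinearMap.mulLeft_apply,
          AlgHom.toLinearMap_apply, map_mul]
        ring
      rw [lhs_eq, h2mul χ (r1a i) (r1b j), Bialgebra.counit_mul]
    rw [Finset.sum_congr rfl fun i hi => e6 i hi]
    -- final collapse
    have : ∑ i ∈ ra.index, ∑ j ∈ rb.index,
        (counit (R := k) (ra.left i) * counit (R := k) (rb.left j)) *
          (χ (𝒮 (ra.right i)) * χ (𝒮 (rb.right j)))
        = (∑ i ∈ ra.index, counit (R := k) (ra.left i) * χ (𝒮 (ra.right i))) *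
          (∑ j ∈ rb.index, counit (R := k) (rb.left j) * χ (𝒮 (rb.right j))) := by
      rw [Finset.sum_mul_sum]
      refine Finset.sum_congr rfl fun i _ => Finset.sum_congr rfl fun j _ => ?_
      ring
    rw [this, h3' χ ra, h3' χ rb]
  rw [← stepA, stepB]
end antimul

section more
variable {k H : Type*} [CommSemiring k] [Semiring H]

lemma antipode_one' [HopfAlgebra k H] : antipode (R := k) (A := H) 1 = 1 := by
  have h := HopfAlgebra.mul_antipode_rTensor_comul_apply (R := k) (A := H) 1
  rw [show comul (R := k) (1 : H) = 1 from map_one (Bialgebra.comulAlgHom k H)] at h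
  simpa [Algebra.TensorProduct.one_def] using h

lemma convAlg [Bialgebra k H] (χ χ' : H →ₐ[k] k) (t : H ⊗[k] H) :
    Algebra.TensorProduct.lmul' k (Algebra.TensorProduct.map χ χ' t)
      = LinearMap.mul' k k (TensorProduct.map χ.toLinearMap χ'.toLinearMap t) := by
  induction t with
  | zero => simp
  | tmul x y => simp
  | add u v hu hv => simp only [map_add, hu, hv]

lemma collapseS [HopfAlgebra k H] (χ : H →ₐ[k] k) (t : H ⊗[k] H) :
    LinearMap.mul' k k (TensorProduct.map χ.toLinearMap
        (χ.toLinearMap ∘ₗ antipode (R := k)) t)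
      = χ (LinearMap.mul' k H (LinearMap.lTensor H (antipode (R := k)) t)) := by
  induction t with
  | zero => simp
  | tmul x y => simp
  | add u v hu hv => simp only [map_add, hu, hv]

end more


open TensorProduct

/-- The convolution `χ ∗ χ'` of two characters: `(χ ∗ χ')(h) = Σ χ(h₁) χ'(h₂)`. -/
noncomputable def convChar {k B : Type*} [CommSemiring k] [Semiring B] [Bialgebra k B]
    (χ χ' : B →ₐ[k] k) : B →ₗ[k] k :=
  (LinearMap.mul' k k) ∘ₗ (TensorProduct.map χ.toLinearMap χ'.toLinearMap) ∘ₗ Coalgebra.comul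

/-- A subalgebra `A` of a bialgebra is a right coideal if `Δ(A) ⊆ A ⊗ B`. -/
def IsRightCoideal {k B : Type*} [CommSemiring k] [Semiring B] [Bialgebra k B]
    (A : Subalgebra k B) : Prop :=
  ∀ a ∈ A, Coalgebra.comul (R := k) a ∈
    LinearMap.range (TensorProduct.map (A.toSubmodule.subtype) (LinearMap.id : B →ₗ[k] B))


open Coalgebra HopfAlgebra in
lemma key_counit {k H : Type*} [CommSemiring k] [Semiring H] [Bialgebra k H]
    (A : Subalgebra k H) (hA : IsRightCoideal A) {χ : H →ₐ[k] k}
    (hχ : ∀ a ∈ A, χ a = counit (R := k) a) (f : H →ₗ[k] k) {a : H} (ha : a ∈ A) :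
    LinearMap.mul' k k (TensorProduct.map χ.toLinearMap f (comul (R := k) a)) = f a := by
  obtain ⟨x, hx⟩ := hA a ha
  have step : ∀ y : (↥(Subalgebra.toSubmodule A)) ⊗[k] H,
      LinearMap.mul' k k (TensorProduct.map χ.toLinearMap f
      (TensorProduct.map (A.toSubmodule.subtype) LinearMap.id y)) =
      LinearMap.mul' k k (TensorProduct.map (counit (R := k)) f
      (TensorProduct.map (A.toSubmodule.subtype) LinearMap.id y)) := by
    intro y
    induction y with
    | zero => simp
    | tmul b h =>
        simp only [TensorProduct.map_tmul, Submodule.coe_subtype, LinearMap.id_coe, id_eq,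
          AlgHom.toLinearMap_apply]
        rw [hχ b b.2]
    | add u v hu hv => simp only [map_add, hu, hv]
  rw [← hx, step x, hx, ← LinearMap.lTensor_comp_rTensor, LinearMap.comp_apply,
    Coalgebra.rTensor_counit_comul]
  simp

/-- for a Hopf algebra `H` and a right coideal subalgebra `A`, the set `X` of
characters of `H` restricting to the counit on `A` contains the counit, is closed under
convolution, and is closed under `χ ↦ χ ∘ S`; i.e. it is a subgroup of the character group. -/
theorem characters_restricting_counit_subgroup {k H : Type*} [Field k] [Ring H]
    [HopfAlgebra k H] (A : Subalgebra k H) (hA : IsRightCoideal A) :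
    (Bialgebra.counitAlgHom k H ∈
        {χ : H →ₐ[k] k | ∀ a ∈ A, χ a = Coalgebra.counit (R := k) a}) ∧
    (∀ χ χ' : H →ₐ[k] k,
      (∀ a ∈ A, χ a = Coalgebra.counit (R := k) a) →
      (∀ a ∈ A, χ' a = Coalgebra.counit (R := k) a) →
      ∃ ψ : H →ₐ[k] k, (∀ h : H, ψ h = convChar χ χ' h) ∧
        ∀ a ∈ A, ψ a = Coalgebra.counit (R := k) a) ∧
    (∀ χ : H →ₐ[k] k,
      (∀ a ∈ A, χ a = Coalgebra.counit (R := k) a) →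
      ∃ ψ : H →ₐ[k] k, (∀ h : H, ψ h = χ (HopfAlgebra.antipode (R := k) h)) ∧
        ∀ a ∈ A, ψ a = Coalgebra.counit (R := k) a) := by
  classical
  refine ⟨fun a _ => rfl, ?_, ?_⟩
  · intro χ χ' hχ hχ'
    refine ⟨(Algebra.TensorProduct.lmul' k).comp
      ((Algebra.TensorProduct.map χ χ').comp (Bialgebra.comulAlgHom k H)), fun h => ?_, ?_⟩
    · simp only [AlgHom.coe_comp, Function.comp_apply, Bialgebra.comulAlgHom_apply, convChar,
        LinearMap.coe_comp]
      exact convAlg χ χ' (Coalgebra.comul h)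
    · intro a ha
      have e1 : (Algebra.TensorProduct.lmul' k).comp
          ((Algebra.TensorProduct.map χ χ').comp (Bialgebra.comulAlgHom k H)) a
          = LinearMap.mul' k k (TensorProduct.map χ.toLinearMap χ'.toLinearMap
              (Coalgebra.comul (R := k) a)) := by
        simp only [AlgHom.coe_comp, Function.comp_apply, Bialgebra.comulAlgHom_apply]
        exact convAlg χ χ' (Coalgebra.comul a)
      rw [e1, key_counit A hA hχ χ'.toLinearMap ha]
      exact hχ' a ha
  · intro χ hχ
    refine ⟨AlgHom.ofLinearMap (χ.toLinearMap ∘ₗ HopfAlgebra.antipode (R := k))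
      (by simpa using congrArg χ (antipode_one' (k := k) (H := H)))
      (fun x y => chiS_mul χ x y), fun h => rfl, ?_⟩
    intro a ha
    have e1 := key_counit A hA hχ (χ.toLinearMap ∘ₗ HopfAlgebra.antipode (R := k)) ha
    have e2 := collapseS χ (Coalgebra.comul (R := k) a)
    have e3 := HopfAlgebra.mul_antipode_lTensor_comul_apply (R := k) a
    change χ (HopfAlgebra.antipode (R := k) a) = Coalgebra.counit (R := k) a
    rw [show χ (HopfAlgebra.antipode (R := k) a)
        = (χ.toLinearMap ∘ₗ HopfAlgebra.antipode (R := k)) a from rfl, ← e1, e2, e3,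
      AlgHom.commutes]
    exact Algebra.algebraMap_self_apply _
end

section
/- Let R be a prime left and right noetherian ring. Then every nonzero two-sided ideal of R contains an element that is regular (neither a left nor a right zero divisor) in R. -/
/-! Auxiliary development: an elementary proof that in a prime noetherian ring,
every nonzero two-sided ideal contains a regular element (a piece of Goldie's
theorem).  We work with left ideals (`Ideal S`) throughout and apply the result
to `S = Rᵐᵒᵖ` at the end. -/

section Aux

variable {S : Type*} [Ring S]

/-- The left annihilator of an element, as a left ideal. -/
def lAnn (a : S) : Ideal S where
  carrier := {x | x * a = 0}
  add_mem' := by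
    intro x y hx hy
    simp only [Set.mem_setOf_eq] at *
    rw [add_mul, hx, hy, add_zero]
  zero_mem' := by simp
  smul_mem' := by
    intro s x hx
    simp only [Set.mem_setOf_eq, smul_eq_mul] at *
    rw [mul_assoc, hx, mul_zero]

lemma mem_lAnn {a x : S} : x ∈ lAnn a ↔ x * a = 0 := Iff.rfl

variable (hP : ∀ a b : S, (∀ y : S, a * y * b = 0) → a = 0 ∨ b = 0)
variable (hN : IsNoetherianRing S)

include hP hN in
/-- In a prime ring with ACC on left ideals, a nil left ideal is zero. -/
lemma nil_ideal_eq_bot (N : Ideal S) (hnil : ∀ x ∈ N, ∃ n : ℕ, 0 < n ∧ x ^ n = 0) :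
    N = ⊥ := by
  by_contra hne
  obtain ⟨a, haN, ha0⟩ := (Submodule.ne_bot_iff N).1 hne
  -- pick an element of N with maximal left annihilator
  set 𝒮 : Set (Ideal S) := {J | ∃ x, x ∈ N ∧ x ≠ 0 ∧ J = lAnn x} with h𝒮
  obtain ⟨M, hM𝒮, hMmax⟩ :=
    (set_has_maximal_iff_noetherian.2 hN) 𝒮 ⟨lAnn a, a, haN, ha0, rfl⟩
  obtain ⟨b, hbN, hb0, rfl⟩ := hM𝒮
  -- show b * t * b = 0 for all t
  have key : ∀ t : S, b * t * b = 0 := by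
    intro t
    by_contra hbtb
    classical
    have htbN : t * b ∈ N := N.smul_mem t hbN
    obtain ⟨m, hm, hmz⟩ := hnil _ htbN
    have hex : ∃ k, b * (t * b) ^ (k + 1) = 0 :=
      ⟨m, by rw [pow_succ', hmz, mul_zero, mul_zero]⟩
    set k₀ := Nat.find hex with hk₀def
    have hk₀ : b * (t * b) ^ (k₀ + 1) = 0 := Nat.find_spec hex
    have hk₀pos : k₀ ≠ 0 := by
      intro h
      apply hbtb
      rw [h] at hk₀
      simpa [pow_one, ← mul_assoc] using hk₀
    obtain ⟨k', hk'⟩ := Nat.exists_eq_succ_of_ne_zero hk₀pos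
    have hne' : b * (t * b) ^ k₀ ≠ 0 := by
      have := Nat.find_min hex (show k' < k₀ by omega)
      rw [hk']
      exact this
    set c := b * (t * b) ^ k₀ with hc
    have hcN : c ∈ N := by
      have hrw : c = ((b * (t * b) ^ k') * t) * b := by
        rw [hc, hk', pow_succ, ← mul_assoc, ← mul_assoc]
      rw [hrw]
      exact N.smul_mem _ hbN
    have hsub : lAnn b ≤ lAnn c := by
      intro x hx
      rw [mem_lAnn] at *
      rw [hc, ← mul_assoc, hx, zero_mul]
    have hceq : lAnn c = lAnn b := by
      by_contra h
      exact hMmax _ ⟨c, hcN, hne', rfl⟩ (lt_of_le_of_ne hsub (Ne.symm h))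
    have hmem : b * t ∈ lAnn c := by
      rw [mem_lAnn, hc]
      calc (b * t) * (b * (t * b) ^ k₀) = b * ((t * b) * (t * b) ^ k₀) := by
            rw [← mul_assoc, ← mul_assoc, mul_assoc b t b]
        _ = b * (t * b) ^ (k₀ + 1) := by rw [← pow_succ']
        _ = 0 := hk₀
    rw [hceq, mem_lAnn] at hmem
    exact hbtb hmem
  exact (hP b b key).elim (fun h => hb0 h) (fun h => hb0 h)

/-- Essential left ideal (elementwise formulation). -/
def IsEss (E : Ideal S) : Prop := ∀ y : S, y ≠ 0 → ∃ s, s * y ≠ 0 ∧ s * y ∈ E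

lemma IsEss.mono {E F : Ideal S} (h : E ≤ F) (hE : IsEss E) : IsEss F :=
  fun y hy => let ⟨s, h1, h2⟩ := hE y hy; ⟨s, h1, h h2⟩

lemma IsEss.inf {E F : Ideal S} (hE : IsEss E) (hF : IsEss F) : IsEss (E ⊓ F) := by
  intro y hy
  obtain ⟨s, hs0, hsE⟩ := hE y hy
  obtain ⟨u, hu0, huF⟩ := hF _ hs0
  refine ⟨u * s, by rwa [mul_assoc], ?_, ?_⟩
  · rw [mul_assoc]
    exact E.smul_mem u hsE
  · rw [mul_assoc]
    exact huF

lemma IsEss.lAnn_mul (x s : S) (h : IsEss (lAnn x)) : IsEss (lAnn (s * x)) := by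
  intro y hy
  by_cases hys : y * s = 0
  · exact ⟨1, by rwa [one_mul], by rw [mem_lAnn, one_mul, ← mul_assoc, hys, zero_mul]⟩
  · obtain ⟨u, hu0, hum⟩ := h _ hys
    rw [mem_lAnn] at hum
    refine ⟨u, fun h0 => hu0 (by rw [← mul_assoc, h0, zero_mul]), ?_⟩
    rw [mem_lAnn]
    calc (u * y) * (s * x) = (u * (y * s)) * x := by
          rw [← mul_assoc, mul_assoc u y s]
      _ = 0 := hum

/-- The (left) singular ideal. -/
def Zsing (S : Type*) [Ring S] : Ideal S where
  carrier := {x | IsEss (lAnn x)}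
  zero_mem' := fun y hy => ⟨1, by rwa [one_mul], by rw [mem_lAnn, one_mul, mul_zero]⟩
  add_mem' := by
    intro x y hx hy
    refine (IsEss.inf hx hy).mono ?_
    rintro u ⟨h1, h2⟩
    rw [mem_lAnn] at *
    rw [mul_add, h1, h2, add_zero]
  smul_mem' := fun s x hx => by
    simpa only [smul_eq_mul, Set.mem_setOf_eq] using IsEss.lAnn_mul x s hx

include hN in
lemma singular_nilpotent (x : S) (hx : IsEss (lAnn x)) : ∃ n : ℕ, 0 < n ∧ x ^ n = 0 := by
  have hmono : Monotone fun k : ℕ => lAnn (x ^ (k + 1)) := by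
    intro i j hij t ht
    rw [mem_lAnn] at *
    rw [show j + 1 = (i + 1) + (j - i) by omega, pow_add, ← mul_assoc, ht, zero_mul]
  obtain ⟨n, hn⟩ := (monotone_stabilizes_iff_noetherian.2 hN) ⟨_, hmono⟩
  refine ⟨n + 1, Nat.succ_pos _, ?_⟩
  by_contra hx0
  have hle : lAnn x ≤ lAnn (x ^ (n + 1)) := by
    intro t ht
    rw [mem_lAnn] at *
    rw [pow_succ', ← mul_assoc, ht, zero_mul]
  obtain ⟨s, hs0, hsm⟩ := (hx.mono hle) _ hx0
  rw [mem_lAnn, mul_assoc, ← pow_add] at hsm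
  have h2 : s ∈ lAnn (x ^ (2 * n + 1 + 1)) := by
    rw [mem_lAnn, show 2 * n + 1 + 1 = n + 1 + (n + 1) by omega]
    exact hsm
  have h3 : s ∈ lAnn (x ^ (n + 1)) := by
    have := hn (2 * n + 1) (by omega)
    have h4 : lAnn (x ^ (n + 1)) = lAnn (x ^ (2 * n + 1 + 1)) := this
    rw [h4]
    exact h2
  exact hs0 h3

include hP hN in
/-- Every nonzero left ideal contains a nonzero `a` with `lAnn (a²) = lAnn a`. -/
lemma exists_stable (K : Ideal S) (hK : K ≠ ⊥) :
    ∃ a ∈ K, a ≠ 0 ∧ lAnn (a * a) = lAnn a := by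
  have hnonnil : ∃ x ∈ K, ∀ n : ℕ, 0 < n → x ^ n ≠ 0 := by
    by_contra hcon
    push_neg at hcon
    apply hK
    apply nil_ideal_eq_bot hP hN K
    intro x hx
    obtain ⟨n, hn1, hn2⟩ := hcon x hx
    exact ⟨n, hn1, hn2⟩
  obtain ⟨x, hxK, hxnil⟩ := hnonnil
  have hmono : Monotone fun k : ℕ => lAnn (x ^ (k + 1)) := by
    intro i j hij t ht
    rw [mem_lAnn] at *
    rw [show j + 1 = (i + 1) + (j - i) by omega, pow_add, ← mul_assoc, ht, zero_mul]
  obtain ⟨n, hn⟩ := (monotone_stabilizes_iff_noetherian.2 hN) ⟨_, hmono⟩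
  refine ⟨x ^ (n + 1), ?_, hxnil (n + 1) (Nat.succ_pos _), ?_⟩
  · rw [pow_succ]
    exact K.smul_mem _ hxK
  · have h1 : x ^ (n + 1) * x ^ (n + 1) = x ^ (2 * n + 1 + 1) := by
      rw [← pow_add]
      congr 1
      omega
    rw [h1]
    exact (hn (2 * n + 1) (by omega)).symm

include hN in
/-- If `c` is left-regular then `Sc` is an essential left ideal. -/
lemma span_essential (c : S) (hc : ∀ x : S, x * c = 0 → x = 0) :
    IsEss (Ideal.span {c}) := by
  intro y hy
  by_contra hcon
  push_neg at hcon
  have hcon' : ∀ s : S, s * y ∈ Ideal.span {c} → s * y = 0 := by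
    intro s hs
    by_contra h0
    exact (hcon s h0) hs
  let rmul : S →ₗ[S] S :=
    { toFun := fun w => w * c
      map_add' := fun u v => add_mul u v c
      map_smul' := fun s u => by simp [smul_eq_mul, mul_assoc] }
  have key : ∀ n : ℕ, y * c ^ n ∈ Ideal.span {z | ∃ j < n, z = y * c ^ j} → y = 0 := by
    intro n
    induction n with
    | zero =>
      intro h
      have hempty : {z | ∃ j < 0, z = y * c ^ j} = (∅ : Set S) := by
        ext u; simp
      rw [hempty, Ideal.span_empty] at h
      simpa using h
    | succ n ih =>
      intro h
      have hset : {z | ∃ j < n + 1, z = y * c ^ j}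
          = insert y ((fun w => w * c) '' {z | ∃ j < n, z = y * c ^ j}) := by
        ext u
        simp only [Set.mem_setOf_eq, Set.mem_insert_iff, Set.mem_image]
        constructor
        · rintro ⟨j, hj, rfl⟩
          cases j with
          | zero => left; rw [pow_zero, mul_one]
          | succ j =>
            right
            exact ⟨y * c ^ j, ⟨j, by omega, rfl⟩, by rw [mul_assoc, ← pow_succ]⟩
        · rintro (rfl | ⟨w, ⟨j, hj, rfl⟩, rfl⟩)
          · exact ⟨0, by omega, by rw [pow_zero, mul_one]⟩
          · exact ⟨j + 1, by omega, by rw [mul_assoc, ← pow_succ]⟩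
      rw [hset, Ideal.mem_span_insert] at h
      obtain ⟨s, w, hw, heq⟩ := h
      have hw2 : w ∈ Submodule.span S ((⇑rmul) '' {z | ∃ j < n, z = y * c ^ j}) := hw
      rw [← Submodule.map_span] at hw2
      have hw' : w ∈ Submodule.map rmul (Ideal.span {z | ∃ j < n, z = y * c ^ j}) := hw2
      obtain ⟨w', hw'span, hww'⟩ := hw'
      have hww : w = w' * c := hww'.symm
      have h2 : y * c ^ n * c = s * y + w' * c := by
        rw [mul_assoc, ← pow_succ, heq, hww]
      have hsy : s * y = (y * c ^ n - w') * c := by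
        rw [sub_mul, h2]
        abel
      have hsy0 : s * y = 0 := by
        apply hcon' s
        rw [hsy]
        exact Ideal.mem_span_singleton'.2 ⟨_, rfl⟩
      rw [hsy0] at hsy
      have h3 : y * c ^ n = w' := by
        have h4 : (y * c ^ n - w') * c = 0 := hsy.symm
        have := hc _ h4
        exact sub_eq_zero.1 this
      exact ih (h3 ▸ hw'span)
  have hmono : Monotone fun n : ℕ => Ideal.span {z | ∃ j < n, z = y * c ^ j} := by
    intro i j hij
    apply Ideal.span_mono
    rintro u ⟨k, hk, rfl⟩
    exact ⟨k, by omega, rfl⟩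
  obtain ⟨n, hn⟩ := (monotone_stabilizes_iff_noetherian.2 hN) ⟨_, hmono⟩
  apply hy
  apply key (n + 1)
  have hgen : y * c ^ (n + 1) ∈ Ideal.span {z | ∃ j < n + 2, z = y * c ^ j} :=
    Ideal.subset_span ⟨n + 1, by omega, rfl⟩
  have heq1 : Ideal.span {z | ∃ j < n + 1, z = y * c ^ j}
      = Ideal.span {z | ∃ j < n + 2, z = y * c ^ j} := by
    have e1 := hn (n + 1) (by omega)
    have e2 := hn (n + 2) (by omega)
    exact e1.symm.trans e2
  rw [heq1]
  exact hgen

/-- Valid lists for the construction of a regular element. -/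
def ValidL (I : Ideal S) (l : List S) : Prop :=
  (∀ a ∈ l, a ∈ I ∧ a ≠ 0 ∧ lAnn (a * a) = lAnn a) ∧ l.Pairwise (fun x y => y * x = 0)

lemma sum_mul_zero (t : List S) (a : S) (h : ∀ b ∈ t, b * a = 0) : t.sum * a = 0 := by
  induction t with
  | nil => simp
  | cons b t ih =>
    rw [List.sum_cons, add_mul, h b List.mem_cons_self,
      ih (fun x hx => h x (List.mem_cons_of_mem _ hx)), add_zero]

lemma valid_sum_ann (I : Ideal S) :
    ∀ l : List S, ValidL I l → ∀ x : S, x * l.sum = 0 → ∀ a ∈ l, x * a = 0 := by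
  intro l
  induction l with
  | nil =>
    intro _ x _ a ha
    exact absurd ha List.not_mem_nil
  | cons a t ih =>
    rintro ⟨hmem, hpw⟩ x hx b hb
    rw [List.pairwise_cons] at hpw
    rw [List.sum_cons] at hx
    have hsa : t.sum * a = 0 := sum_mul_zero t a hpw.1
    have h2 : x * a * a + x * (t.sum * a) = 0 := by
      calc x * a * a + x * (t.sum * a) = (x * (a + t.sum)) * a := by noncomm_ring
        _ = 0 := by rw [hx, zero_mul]
    rw [hsa, mul_zero, add_zero] at h2
    have hxa : x * a = 0 := by
      have hx' : x ∈ lAnn (a * a) := by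
        rw [mem_lAnn, ← mul_assoc]
        exact h2
      rw [(hmem a List.mem_cons_self).2.2] at hx'
      exact hx'
    rcases List.mem_cons.1 hb with rfl | hbt
    · exact hxa
    · have hxt : x * t.sum = 0 := by
        have : x * a + x * t.sum = 0 := by rw [← mul_add]; exact hx
        rwa [hxa, zero_add] at this
      exact ih ⟨fun c hc => hmem c (List.mem_cons_of_mem _ hc), hpw.2⟩ x hxt b hbt

lemma valid_span_zero (I : Ideal S) :
    ∀ l : List S, ValidL I l → ∀ z : S, (∀ a ∈ l, z * a = 0) →
      z ∈ Ideal.span {b | b ∈ l} → z = 0 := by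
  intro l
  induction l with
  | nil =>
    intro _ z _ hz
    have : {b | b ∈ ([] : List S)} = (∅ : Set S) := by ext u; simp
    rw [this, Ideal.span_empty] at hz
    simpa using hz
  | cons a t ih =>
    rintro ⟨hmem, hpw⟩ z hza hz
    rw [List.pairwise_cons] at hpw
    have hset : {b | b ∈ a :: t} = insert a {b | b ∈ t} := by
      ext u; simp [List.mem_cons]
    rw [hset, Ideal.mem_span_insert] at hz
    obtain ⟨s, w, hw, rfl⟩ := hz
    have hwa : w * a = 0 := by
      have hle : Ideal.span {b | b ∈ t} ≤ lAnn a :=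
        Ideal.span_le.2 (fun x hx => hpw.1 x hx)
      exact hle hw
    have hsa : s * a = 0 := by
      have h1 : (s * a + w) * a = 0 := hza a List.mem_cons_self
      have h2 : s * (a * a) = 0 := by
        calc s * (a * a) = (s * a + w) * a - w * a := by noncomm_ring
          _ = 0 := by rw [h1, hwa, sub_zero]
      have hx' : s ∈ lAnn (a * a) := h2
      rw [(hmem a List.mem_cons_self).2.2] at hx'
      exact hx'
    rw [hsa, zero_add]
    have hza' : ∀ c ∈ t, w * c = 0 := by
      intro c hc
      have := hza c (List.mem_cons_of_mem _ hc)
      rwa [add_mul, hsa, zero_mul, zero_add] at this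
    exact ih ⟨fun c hc => hmem c (List.mem_cons_of_mem _ hc), hpw.2⟩ w hza' hw

/-- Intersection of the left annihilators of the elements of a list. -/
def interAnn (l : List S) : Ideal S where
  carrier := {x | ∀ a ∈ l, x * a = 0}
  add_mem' := fun hx hy a ha => by rw [add_mul, hx a ha, hy a ha, add_zero]
  zero_mem' := fun a _ => zero_mul a
  smul_mem' := fun s x hx a ha => by
    simp only [smul_eq_mul]
    rw [mul_assoc, hx a ha, mul_zero]

include hP hN in
/-- Main lemma: a nonzero "two-sided" left ideal of a prime left noetherian ring
contains a regular element. -/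
lemma main_lemma (I : Ideal S) (hIr : ∀ x ∈ I, ∀ s : S, x * s ∈ I) (hI : I ≠ ⊥) :
    ∃ c ∈ I, (∀ x : S, x * c = 0 → x = 0) ∧ (∀ x : S, c * x = 0 → x = 0) := by
  set 𝒜 : Set (Ideal S) := {J | ∃ l : List S, ValidL I l ∧ J = Ideal.span {b | b ∈ l}}
    with h𝒜
  have hne𝒜 : 𝒜.Nonempty :=
    ⟨Ideal.span {b | b ∈ ([] : List S)}, [], ⟨by simp, List.Pairwise.nil⟩, rfl⟩
  obtain ⟨J₀, hJ𝒜, hJmax⟩ := (set_has_maximal_iff_noetherian.2 hN) 𝒜 hne𝒜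
  obtain ⟨l, hval, rfl⟩ := hJ𝒜
  -- termination: I ⊓ interAnn l = ⊥
  have hterm : I ⊓ interAnn l = ⊥ := by
    by_contra hne
    obtain ⟨b, hbK, hb0, hbst⟩ := exists_stable hP hN _ hne
    have hbI : b ∈ I := hbK.1
    have hbann : ∀ a ∈ l, b * a = 0 := hbK.2
    have hval' : ValidL I (l ++ [b]) := by
      constructor
      · intro a ha
        rcases List.mem_append.1 ha with h | h
        · exact hval.1 a h
        · have hab : a = b := by simpa using h
          rw [hab]
          exact ⟨hbI, hb0, hbst⟩
      · rw [List.pairwise_append]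
        refine ⟨hval.2, by simp, ?_⟩
        intro x hx y hy
        have hyb : y = b := by simpa using hy
        rw [hyb]
        exact hbann x hx
    have hlt : Ideal.span {x | x ∈ l} < Ideal.span {x | x ∈ l ++ [b]} := by
      refine lt_of_le_of_ne (Ideal.span_mono ?_) ?_
      · intro x hx
        simp only [Set.mem_setOf_eq, List.mem_append]
        exact Or.inl hx
      · intro heq
        have hbmem : b ∈ Ideal.span {x | x ∈ l ++ [b]} := Ideal.subset_span (by simp)
        rw [← heq] at hbmem
        exact hb0 (valid_span_zero I l hval b hbann hbmem)
    exact hJmax _ ⟨l ++ [b], hval', rfl⟩ hlt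
  -- interAnn l = ⊥
  have hann_bot : interAnn l = ⊥ := by
    by_contra hne
    obtain ⟨k, hk, hk0⟩ := (Submodule.ne_bot_iff _).1 hne
    have hex : ∃ u ∈ I, u * k ≠ 0 := by
      by_contra hall
      push_neg at hall
      obtain ⟨u₀, hu₀, hu00⟩ := (Submodule.ne_bot_iff _).1 hI
      have hu : ∀ t : S, u₀ * t * k = 0 := fun t => hall (u₀ * t) (hIr u₀ hu₀ t)
      exact (hP u₀ k hu).elim hu00 hk0
    obtain ⟨u, huI, huk⟩ := hex
    have hmem2 : u * k ∈ I ⊓ interAnn l :=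
      ⟨hIr u huI k, fun a ha => by rw [mul_assoc, hk a ha, mul_zero]⟩
    rw [hterm] at hmem2
    exact huk hmem2
  have hsummem : l.sum ∈ I := list_sum_mem (fun a ha => (hval.1 a ha).1)
  have hleft : ∀ x : S, x * l.sum = 0 → x = 0 := by
    intro x hx
    have hmem3 : x ∈ interAnn l := valid_sum_ann I l hval x hx
    rw [hann_bot] at hmem3
    simpa using hmem3
  refine ⟨l.sum, hsummem, hleft, ?_⟩
  intro x hx
  have hEss : IsEss (Ideal.span {l.sum}) := span_essential hN l.sum hleft
  have hxZ : x ∈ Zsing S := by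
    show IsEss (lAnn x)
    apply hEss.mono
    rw [Ideal.span_singleton_le_iff_mem]
    exact mem_lAnn.2 hx
  have hZbot : Zsing S = ⊥ :=
    nil_ideal_eq_bot hP hN (Zsing S) (fun z hz => singular_nilpotent hN z hz)
  rw [hZbot] at hxZ
  simpa using hxZ

end Aux

/-- in a prime left and right noetherian ring, every nonzero two-sided ideal
contains an element that is regular (neither a left nor a right zero divisor). -/
theorem prime_noetherian_ideal_contains_regular {R : Type*} [Ring R]
    (hnoethL : IsNoetherianRing R) (hnoethR : IsNoetherianRing Rᵐᵒᵖ)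
    (hprime : ∀ I J : TwoSidedIdeal R, (∀ a ∈ I, ∀ b ∈ J, a * b = 0) → I = ⊥ ∨ J = ⊥) :
    ∀ I : TwoSidedIdeal R, I ≠ ⊥ →
      ∃ r ∈ I, (∀ x : R, r * x = 0 → x = 0) ∧ (∀ x : R, x * r = 0 → x = 0) := by
  intro I hI
  -- elementwise primeness in R
  have PR : ∀ a b : R, (∀ y : R, a * y * b = 0) → a = 0 ∨ b = 0 := by
    intro a b hab
    by_contra hcon
    push_neg at hcon
    obtain ⟨ha, hb⟩ := hcon
    let A : TwoSidedIdeal R := TwoSidedIdeal.mk' {z | ∀ y w : R, z * y * b * w = 0}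
      (by intro y w; simp)
      (by
        intro x z hx hz y w
        have h1 := hx y w
        have h2 := hz y w
        calc (x + z) * y * b * w = x * y * b * w + z * y * b * w := by noncomm_ring
          _ = 0 := by rw [h1, h2, add_zero])
      (by
        intro x hx y w
        have h1 := hx y w
        calc (-x) * y * b * w = -(x * y * b * w) := by noncomm_ring
          _ = 0 := by rw [h1, neg_zero])
      (by
        intro x z hz y w
        have h1 := hz y w
        calc (x * z) * y * b * w = x * (z * y * b * w) := by noncomm_ring
          _ = 0 := by rw [h1, mul_zero])
      (by
        intro x z hx y w
        have h1 := hx (z * y) w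
        calc (x * z) * y * b * w = x * (z * y) * b * w := by noncomm_ring
          _ = 0 := h1)
    have hmemA : ∀ z : R, z ∈ A ↔ ∀ y w : R, z * y * b * w = 0 := fun z =>
      TwoSidedIdeal.mem_mk' _ _ _ _ _ _ z
    have haA : a ∈ A := by
      rw [hmemA]
      intro y w
      rw [hab y, zero_mul]
    let B : TwoSidedIdeal R := TwoSidedIdeal.mk' {z | ∀ x ∈ A, x * z = 0}
      (by intro x _; simp)
      (by
        intro x z hx hz u hu
        rw [mul_add, hx u hu, hz u hu, add_zero])
      (by intro x hx u hu; rw [mul_neg, hx u hu, neg_zero])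
      (by
        intro x z hz u hu
        rw [← mul_assoc]
        exact hz _ (A.mul_mem_right u x hu))
      (by
        intro x z hx u hu
        rw [← mul_assoc, hx u hu, zero_mul])
    have hmemB : ∀ z : R, z ∈ B ↔ ∀ x ∈ A, x * z = 0 := fun z =>
      TwoSidedIdeal.mem_mk' _ _ _ _ _ _ z
    have hbB : b ∈ B := by
      rw [hmemB]
      intro x hx
      have := (hmemA x).1 hx 1 1
      simpa using this
    rcases hprime A B (fun x hx z hz => (hmemB z).1 hz x hx) with h | h
    · rw [h] at haA
      exact ha ((TwoSidedIdeal.mem_bot _).1 haA)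
    · rw [h] at hbB
      exact hb ((TwoSidedIdeal.mem_bot _).1 hbB)
  -- a nonzero element of I
  obtain ⟨a0, ha0I, ha00⟩ : ∃ a ∈ I, a ≠ 0 := by
    by_contra h
    push_neg at h
    apply hI
    apply le_antisymm
    · intro x hx
      exact (TwoSidedIdeal.mem_bot _).2 (h x hx)
    · intro x hx
      rw [(TwoSidedIdeal.mem_bot _).1 hx]
      exact TwoSidedIdeal.zero_mem I
  -- transfer to the opposite ring
  let Iop : Ideal Rᵐᵒᵖ :=
    { carrier := {x | x.unop ∈ I}
      add_mem' := fun hx hy => by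
        simp only [Set.mem_setOf_eq, MulOpposite.unop_add]
        exact TwoSidedIdeal.add_mem _ hx hy
      zero_mem' := by
        simp only [Set.mem_setOf_eq, MulOpposite.unop_zero]
        exact TwoSidedIdeal.zero_mem I
      smul_mem' := fun s x hx => by
        simp only [Set.mem_setOf_eq, smul_eq_mul, MulOpposite.unop_mul]
        exact TwoSidedIdeal.mul_mem_right _ _ _ hx }
  have hIr : ∀ x ∈ Iop, ∀ s : Rᵐᵒᵖ, x * s ∈ Iop := by
    intro x hx s
    show (x * s).unop ∈ I
    rw [MulOpposite.unop_mul]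
    exact TwoSidedIdeal.mul_mem_left _ _ _ hx
  have hIop : Iop ≠ ⊥ := by
    rw [Submodule.ne_bot_iff]
    refine ⟨MulOpposite.op a0, ha0I, ?_⟩
    simpa using ha00
  have hPop : ∀ a b : Rᵐᵒᵖ, (∀ y : Rᵐᵒᵖ, a * y * b = 0) → a = 0 ∨ b = 0 := by
    intro a b h
    have hun : ∀ y : R, b.unop * y * a.unop = 0 := by
      intro y
      have h1 := h (MulOpposite.op y)
      have h2 : (a * MulOpposite.op y * b).unop = b.unop * y * a.unop := by
        simp [MulOpposite.unop_mul, mul_assoc]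
      rw [h1] at h2
      simpa using h2.symm
    rcases PR b.unop a.unop hun with h' | h'
    · right
      exact MulOpposite.unop_injective (by simpa using h')
    · left
      exact MulOpposite.unop_injective (by simpa using h')
  obtain ⟨c, hcI, hcl, hcr⟩ := main_lemma hPop hnoethR Iop hIr hIop
  refine ⟨c.unop, hcI, ?_, ?_⟩
  · intro x hx
    have h1 : (MulOpposite.op x) * c = 0 := by
      apply MulOpposite.unop_injective
      rw [MulOpposite.unop_mul]
      simpa using hx
    have := hcl _ h1
    simpa using congrArg MulOpposite.unop this
  · intro x hx
    have h1 : c * (MulOpposite.op x) = 0 := by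
      apply MulOpposite.unop_injective
      rw [MulOpposite.unop_mul]
      simpa using hx
    have := hcr _ h1
    simpa using congrArg MulOpposite.unop this
end

section
/- Let R_α and R_β be prime noetherian rings and let M be an (R_α, R_β)-bimodule that is finitely generated and torsionfree on each side (a bond). If m ∈ M is a nonzero normal element, i.e. R_α·m = m·R_β, then the left annihilator of m in R_α and the right annihilator of m in R_β are both zero. -/
/-!
The annihilator of a normal element `m` is a two-sided ideal, because normality lets right
multiplication pass through `m`; torsionfreeness forbids it to contain a regular element. So it
suffices that a nonzero two-sided ideal `I` of a prime left and right noetherian ring contains a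
regular element (Goldie). ACC on right annihilators kills nil one-sided ideals of a prime ring,
so Fitting's lemma applied to a non-nilpotent `a ∈ I` gives `b = aⁿ ≠ 0` in `I` with
`bR ∩ r.ann(b) = 0`. Adding such elements to a `c` whose `l.ann(r.ann(c))` is maximal forces
`r.ann(c) = 0`. Then `cR` is an essential right ideal, so every `x` with `xc = 0` is nilpotent,
and `l.ann(c) = 0` as well.
-/

open MulOpposite Ideal

def IsPrimeRing (R : Type*) [Ring R] : Prop :=
  ∀ a b : R, (∀ x : R, a * x * b = 0) → a = 0 ∨ b = 0

theorem IsPrimeRing.op {R : Type*} [Ring R] (hR : IsPrimeRing R) : IsPrimeRing Rᵐᵒᵖ :=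
  fun a b hab ↦ (hR b.unop a.unop fun x ↦ by
    simpa [mul_assoc] using congrArg unop (hab (MulOpposite.op x))).symm.imp
      (unop_eq_zero_iff _).mp (unop_eq_zero_iff _).mp

theorem IsNilpotent.exists_pow_ne_zero_pow_mul_eq_zero {M : Type*} [MonoidWithZero M] {x : M}
    (hx : IsNilpotent x) (hx0 : x ≠ 0) : ∃ n, x ^ (n + 1) ≠ 0 ∧ x ^ (n + 1) * x = 0 := by
  have := nontrivial_of_ne x 0 hx0
  have hpos := pos_nilpotencyClass_iff.mpr hx
  have hne_one : nilpotencyClass x ≠ 1 := fun h ↦ hx0 (nilpotencyClass_eq_one.mp h)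
  obtain ⟨n, hn⟩ : ∃ n, nilpotencyClass x = n + 1 + 1 := ⟨nilpotencyClass x - 2, by omega⟩
  obtain ⟨hpow, hne⟩ := nilpotencyClass_eq_succ_iff.mp hn
  exact ⟨n, hne, by rw [← _root_.pow_succ]; exact hpow⟩

theorem IsNilpotent.mul_comm {M : Type*} [MonoidWithZero M] {a b : M}
    (h : IsNilpotent (b * a)) : IsNilpotent (a * b) := by
  obtain ⟨n, hn⟩ := h
  exact ⟨n + 1, by rw [_root_.pow_succ, ← mul_assoc, mul_pow_mul, hn, mul_zero, zero_mul]⟩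

namespace Ideal

variable {R : Type*} [Ring R]

def leftAnnihilator (s : Set R) : Ideal R := ⨅ z ∈ s, torsionOf R R z

theorem mem_leftAnnihilator {s : Set R} {y : R} :
    y ∈ leftAnnihilator s ↔ ∀ z ∈ s, y * z = 0 := by
  simp [leftAnnihilator, Submodule.mem_iInf]

theorem torsionOf_op_le_iff {a b : R} :
    torsionOf Rᵐᵒᵖ R a ≤ torsionOf Rᵐᵒᵖ R b ↔ ∀ z, a * z = 0 → b * z = 0 :=
  ⟨fun h z ↦ @h (op z), fun h z ↦ h z.unop⟩

theorem isTwoSided_torsionOf {S M : Type*} [AddCommGroup M] [Module R M] [SMulZeroClass S M]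
    [SMulCommClass R S M] {m : M} (h : ∀ r : R, ∃ s : S, r • m = s • m) :
    (torsionOf R M m).IsTwoSided :=
  ⟨fun b ha ↦ by
    obtain ⟨s, hs⟩ := h b
    rw [mem_torsionOf_iff] at ha ⊢
    rw [mul_smul, hs, smul_comm, ha, smul_zero]⟩

end Ideal

/-- `b R ∩ r.ann(b) = 0`. -/
def IsRightAnnDisjoint {R : Type*} [Ring R] (b : R) : Prop :=
  ∀ x : R, b * (b * x) = 0 → b * x = 0

namespace IsRightAnnDisjoint

variable {R : Type*} [Ring R] {c d : R}

theorem mul_eq_zero_of_add_mul_eq_zero (hc : IsRightAnnDisjoint c) (hcd : c * d = 0) {x : R}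
    (hx : (c + d) * x = 0) : c * x = 0 ∧ d * x = 0 := by
  have hcx : c * x = 0 := hc x (by
    have h : c * ((c + d) * x) = 0 := by rw [hx, mul_zero]
    rwa [add_mul, mul_add, ← mul_assoc c d, hcd, zero_mul, add_zero] at h)
  exact ⟨hcx, by rwa [add_mul, hcx, zero_add] at hx⟩

theorem add (hc : IsRightAnnDisjoint c) (hd : IsRightAnnDisjoint d) (hcd : c * d = 0) :
    IsRightAnnDisjoint (c + d) := by
  intro x h
  obtain ⟨h1, h2⟩ := hc.mul_eq_zero_of_add_mul_eq_zero hcd h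
  rw [add_mul, mul_add, ← mul_assoc c d, hcd, zero_mul, add_zero] at h1
  rw [add_mul, hc x h1, zero_add] at h2 ⊢
  exact hd x h2

end IsRightAnnDisjoint

section RightNoetherian

variable {R : Type*} [Ring R] [IsNoetherianRing Rᵐᵒᵖ]

instance : IsNoetherian Rᵐᵒᵖ R :=
  isNoetherian_of_linearEquiv (opLinearEquiv Rᵐᵒᵖ).symm

/-- Fitting's lemma for left multiplication by `a` on the right module `R`. -/
theorem exists_pow_isRightAnnDisjoint (a : R) : ∃ n ≠ 0, IsRightAnnDisjoint (a ^ n) := by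
  obtain ⟨n, hdisj, hn⟩ := ((Module.End.eventually_disjoint_ker_pow_range_pow
    (LinearMap.mulLeft Rᵐᵒᵖ a)).and (Filter.eventually_ne_atTop 0)).exists
  simp only [LinearMap.pow_mulLeft] at hdisj
  refine ⟨n, hn, fun x hx ↦ Submodule.disjoint_def.mp hdisj (a ^ n * x) hx ⟨x, rfl⟩⟩

theorem exists_mul_eq_mul_ne_zero {c : R} (hc : IsLeftRegular c) {t : R} (ht : t ≠ 0) :
    ∃ r s : R, t * r = c * s ∧ t * r ≠ 0 := by
  by_contra! h
  -- if `tR ∩ cR = 0`, then `(x, y) ↦ c x + y` embeds `R ⊕ tR` into `R`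
  let f : R × Submodule.span Rᵐᵒᵖ {t} →ₗ[Rᵐᵒᵖ] R :=
    (LinearMap.mulLeft Rᵐᵒᵖ c).coprod (Submodule.span Rᵐᵒᵖ {t}).subtype
  have hf : Function.Injective f := by
    rw [injective_iff_map_eq_zero]
    rintro ⟨x, n, hn⟩ hx
    obtain ⟨r, rfl⟩ := Submodule.mem_span_singleton.mp hn
    change c * x + t * r.unop = 0 at hx
    have htr : t * r.unop = 0 :=
      h r.unop (-x) (by rw [mul_neg, eq_neg_iff_add_eq_zero, add_comm, hx])
    rw [htr, add_zero] at hx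
    ext
    · exact isLeftRegular_iff_right_eq_zero_of_mul.mp hc x hx
    · exact htr
  have := IsNoetherian.subsingleton_of_prod_injective f hf
  exact ht (congrArg Subtype.val
    (Subsingleton.elim (⟨t, Submodule.mem_span_singleton_self t⟩ : Submodule.span Rᵐᵒᵖ {t}) 0))

namespace IsPrimeRing

variable (hR : IsPrimeRing R)
include hR

theorem eq_zero_of_isNilpotent_of_mul_left_mem {S : Set R} (hS : ∀ r, ∀ x ∈ S, r * x ∈ S)
    (hnil : ∀ x ∈ S, IsNilpotent x) : ∀ x ∈ S, x = 0 := by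
  by_contra! h
  obtain ⟨a, ⟨haS, ha0⟩, hmax⟩ :=
    exists_maximalFor_of_wellFoundedGT (fun x ↦ x ∈ S ∧ x ≠ 0) (torsionOf Rᵐᵒᵖ R) h
  refine ha0 ((hR a a fun y ↦ ?_).elim id id)
  by_cases hya : y * a = 0
  · rw [mul_assoc, hya, mul_zero]
  obtain ⟨n, hp0, hp⟩ := (hnil _ (hS y a haS)).exists_pow_ne_zero_pow_mul_eq_zero hya
  have hpS : (y * a) ^ (n + 1) ∈ S := by
    rw [pow_succ, ← mul_assoc]
    exact hS _ a haS
  have hle : torsionOf Rᵐᵒᵖ R a ≤ torsionOf Rᵐᵒᵖ R ((y * a) ^ (n + 1)) :=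
    torsionOf_op_le_iff.mpr fun z hz ↦ by
      rw [pow_succ, mul_assoc, mul_assoc, hz, mul_zero, mul_zero]
  rw [mul_assoc]
  exact torsionOf_op_le_iff.mp (hmax ⟨hpS, hp0⟩ hle) _ hp

theorem eq_zero_of_isNilpotent_of_mul_right_mem {T : Set R} (hT : ∀ t ∈ T, ∀ r, t * r ∈ T)
    (hnil : ∀ t ∈ T, IsNilpotent t) : ∀ t ∈ T, t = 0 := by
  intro t ht
  simpa using hR.eq_zero_of_isNilpotent_of_mul_left_mem (S := {x | ∃ r, ∃ u ∈ T, x = r * u})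
    (fun r _ ⟨r', u, hu, hx⟩ ↦ ⟨r * r', u, hu, by rw [hx, mul_assoc]⟩)
    (fun _ ⟨r, u, hu, hx⟩ ↦ hx ▸ (hnil _ (hT u hu r)).mul_comm) (1 * t) ⟨1, t, ht, rfl⟩

theorem exists_mem_ne_zero_isRightAnnDisjoint {T : Set R} (hT : ∀ t ∈ T, ∀ r, t * r ∈ T)
    {t : R} (ht : t ∈ T) (ht0 : t ≠ 0) : ∃ b ∈ T, b ≠ 0 ∧ IsRightAnnDisjoint b := by
  obtain ⟨a, haT, ha⟩ : ∃ a ∈ T, ¬IsNilpotent a := by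
    by_contra! h
    exact ht0 (hR.eq_zero_of_isNilpotent_of_mul_right_mem hT h t ht)
  obtain ⟨n, hn, hdisj⟩ := exists_pow_isRightAnnDisjoint a
  obtain ⟨k, rfl⟩ := Nat.exists_eq_succ_of_ne_zero hn
  refine ⟨a ^ (k + 1), ?_, fun h ↦ ha ⟨k + 1, h⟩, hdisj⟩
  rw [pow_succ']
  exact hT a haT _

theorem isRightRegular_of_isLeftRegular {c : R} (hc : IsLeftRegular c) : IsRightRegular c := by
  rw [isRightRegular_iff_left_eq_zero_of_mul]
  refine hR.eq_zero_of_isNilpotent_of_mul_left_mem (S := {x | x * c = 0})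
    (fun r x (hx : x * c = 0) ↦ show r * x * c = 0 by rw [mul_assoc, hx, mul_zero]) fun x hx ↦ ?_
  obtain ⟨n, hn, hdisj⟩ := exists_pow_isRightAnnDisjoint x
  refine ⟨n, by_contra fun hxn ↦ ?_⟩
  obtain ⟨r, s, hrs, hr0⟩ := exists_mul_eq_mul_ne_zero hc hxn
  obtain ⟨k, rfl⟩ := Nat.exists_eq_succ_of_ne_zero hn
  refine hr0 (hdisj r ?_)
  rw [hrs, pow_succ, mul_assoc, ← mul_assoc x, hx, zero_mul, mul_zero]

end IsPrimeRing

end RightNoetherian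

namespace IsPrimeRing

variable {R : Type*} [Ring R] [IsNoetherianRing R] [IsNoetherianRing Rᵐᵒᵖ] (hR : IsPrimeRing R)
include hR

theorem exists_isRegular_mem (I : Ideal R) [I.IsTwoSided] (hI : I ≠ ⊥) :
    ∃ c ∈ I, IsRegular c := by
  obtain ⟨a, haI, ha0⟩ := Submodule.exists_mem_ne_zero_of_ne_bot hI
  have hIR : ∀ u ∈ (I : Set R), ∀ r, u * r ∈ I := fun u hu r ↦ I.mul_mem_right r hu
  obtain ⟨c, ⟨hcI, -, hc⟩, hmax⟩ := exists_maximalFor_of_wellFoundedGT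
    (fun c ↦ c ∈ I ∧ c ≠ 0 ∧ IsRightAnnDisjoint c)
    (fun c ↦ leftAnnihilator {z | c * z = 0})
    (hR.exists_mem_ne_zero_isRightAnnDisjoint hIR haI ha0)
  have hcreg : IsLeftRegular c := by
    rw [isLeftRegular_iff_right_eq_zero_of_mul]
    by_contra! ⟨x, hcx, hx0⟩
    obtain ⟨y, hy⟩ : ∃ y, x * y * a ≠ 0 := by
      by_contra! h
      exact (hR x a h).elim hx0 ha0
    obtain ⟨d, ⟨hdI, hcd⟩, hd0, hd⟩ := hR.exists_mem_ne_zero_isRightAnnDisjoint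
      (T := {u | u ∈ I ∧ c * u = 0})
      (fun u ⟨huI, hcu⟩ r ↦ ⟨I.mul_mem_right r huI, by rw [← mul_assoc, hcu, zero_mul]⟩)
      ⟨I.mul_mem_left _ haI, by rw [← mul_assoc, ← mul_assoc, hcx, zero_mul, zero_mul]⟩ hy
    have hdd : d * d ≠ 0 := fun h ↦ hd0 (by simpa using hd 1 (by simpa using h))
    have hcdd : (c + d) * d = d * d := by rw [add_mul, hcd, zero_add]
    have hle : leftAnnihilator {z | c * z = 0} ≤ leftAnnihilator {z | (c + d) * z = 0} :=
      fun y hy ↦ mem_leftAnnihilator.mpr fun z hz ↦ mem_leftAnnihilator.mp hy z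
        (hc.mul_eq_zero_of_add_mul_eq_zero hcd hz).1
    -- `c + d ∈ l.ann(r.ann(c + d)) = l.ann(r.ann(c))`, but `(c + d) d = d² ≠ 0` with `c d = 0`
    have hself := hmax ⟨I.add_mem hcI hdI, fun h ↦ hdd (by rw [← hcdd, h, zero_mul]),
      hc.add hd hcd⟩ hle (mem_leftAnnihilator.mpr fun z hz ↦ hz)
    exact hdd (hcdd ▸ mem_leftAnnihilator.mp hself d hcd)
  exact ⟨c, hcI, hcreg, hR.isRightRegular_of_isLeftRegular hcreg⟩

theorem torsionOf_eq_bot {M : Type*} [AddCommGroup M] [Module R M]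
    (htf : ∀ c : R, IsRegular c → ∀ v : M, c • v = 0 → v = 0) {m : M} (hm : m ≠ 0)
    [(torsionOf R M m).IsTwoSided] : torsionOf R M m = ⊥ := by
  by_contra hI
  obtain ⟨c, hc, hreg⟩ := hR.exists_isRegular_mem _ hI
  exact hm (htf c hreg m hc)

end IsPrimeRing

theorem bond_normal_element_annihilators_general {Rα Rβ M : Type*} [Ring Rα] [Ring Rβ]
    [AddCommGroup M] [Module Rα M] [Module Rβᵐᵒᵖ M] [SMulCommClass Rα Rβᵐᵒᵖ M]
    -- `Rα` and `Rβ` are left and right noetherian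
    (hnoeth : IsNoetherianRing Rα ∧ IsNoetherianRing Rαᵐᵒᵖ ∧
      IsNoetherianRing Rβ ∧ IsNoetherianRing Rβᵐᵒᵖ)
    -- `Rα` and `Rβ` are prime rings
    (hprimeα : ∀ a b : Rα, (∀ x : Rα, a * x * b = 0) → a = 0 ∨ b = 0)
    (hprimeβ : ∀ a b : Rβ, (∀ x : Rβ, a * x * b = 0) → a = 0 ∨ b = 0)
    -- `M` is torsionfree on each side
    (htfL : ∀ r : Rα, ((∀ x : Rα, r * x = 0 → x = 0) ∧ (∀ x : Rα, x * r = 0 → x = 0)) →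
      ∀ v : M, r • v = 0 → v = 0)
    (htfR : ∀ s : Rβ, ((∀ x : Rβ, s * x = 0 → x = 0) ∧ (∀ x : Rβ, x * s = 0 → x = 0)) →
      ∀ v : M, (op s) • v = 0 → v = 0)
    -- `m` is a nonzero normal element: `Rα·m = m·Rβ`
    (m : M) (hm : m ≠ 0)
    (hnormal : {x : M | ∃ r : Rα, r • m = x} = {x : M | ∃ s : Rβ, (op s) • m = x}) :
    (∀ r : Rα, r • m = 0 → r = 0) ∧ (∀ s : Rβ, (op s) • m = 0 → s = 0) := by
  obtain ⟨_, _, _, _⟩ := hnoeth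
  have := isNoetherianRing_of_ringEquiv Rβ (RingEquiv.opOp Rβ)
  have := SMulCommClass.symm Rα Rβᵐᵒᵖ M
  have : (torsionOf Rα M m).IsTwoSided := isTwoSided_torsionOf fun r ↦
    let ⟨s, hs⟩ := (Set.ext_iff.mp hnormal (r • m)).mp ⟨r, rfl⟩; ⟨op s, hs.symm⟩
  have : (torsionOf Rβᵐᵒᵖ M m).IsTwoSided := isTwoSided_torsionOf fun s ↦
    let ⟨r, hr⟩ := (Set.ext_iff.mp hnormal (s • m)).mpr ⟨s.unop, rfl⟩; ⟨r, hr.symm⟩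
  have hα := IsPrimeRing.torsionOf_eq_bot hprimeα
    (fun c hc ↦ htfL c (isRegular_iff_eq_zero_of_mul.mp hc)) hm
  have hβ := IsPrimeRing.torsionOf_eq_bot (IsPrimeRing.op hprimeβ)
    (fun c hc ↦ htfR c.unop (isRegular_iff_eq_zero_of_mul.mp hc.unop)) hm
  exact ⟨fun r hr ↦ (Submodule.eq_bot_iff _).mp hα r hr,
    fun s hs ↦ op_injective ((Submodule.eq_bot_iff _).mp hβ (op s) hs)⟩

/-- if `M` is a bond (finitely generated torsionfree bimodule on each side)
between prime noetherian rings `Rα` and `Rβ`, and `m ∈ M` is a nonzero normal element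
(`Rα·m = m·Rβ`), then the left annihilator of `m` in `Rα` and the right annihilator of `m`
in `Rβ` are both zero. -/
theorem bond_normal_element_annihilators {Rα Rβ M : Type*} [Ring Rα] [Ring Rβ]
    [AddCommGroup M] [Module Rα M] [Module Rβᵐᵒᵖ M] [SMulCommClass Rα Rβᵐᵒᵖ M]
    -- `Rα` and `Rβ` are left and right noetherian
    (hnoeth : IsNoetherianRing Rα ∧ IsNoetherianRing Rαᵐᵒᵖ ∧
      IsNoetherianRing Rβ ∧ IsNoetherianRing Rβᵐᵒᵖ)
    -- `Rα` and `Rβ` are prime rings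
    (hprimeα : ∀ a b : Rα, (∀ x : Rα, a * x * b = 0) → a = 0 ∨ b = 0)
    (hprimeβ : ∀ a b : Rβ, (∀ x : Rβ, a * x * b = 0) → a = 0 ∨ b = 0)
    -- `M` is finitely generated on each side
    (hfgL : Module.Finite Rα M) (hfgR : Module.Finite Rβᵐᵒᵖ M)
    -- `M` is torsionfree on each side
    (htfL : ∀ r : Rα, ((∀ x : Rα, r * x = 0 → x = 0) ∧ (∀ x : Rα, x * r = 0 → x = 0)) →
      ∀ v : M, r • v = 0 → v = 0)
    (htfR : ∀ s : Rβ, ((∀ x : Rβ, s * x = 0 → x = 0) ∧ (∀ x : Rβ, x * s = 0 → x = 0)) →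
      ∀ v : M, (op s) • v = 0 → v = 0)
    -- `m` is a nonzero normal element: `Rα·m = m·Rβ`
    (m : M) (hm : m ≠ 0)
    (hnormal : {x : M | ∃ r : Rα, r • m = x} = {x : M | ∃ s : Rβ, (op s) • m = x}) :
    (∀ r : Rα, r • m = 0 → r = 0) ∧ (∀ s : Rβ, (op s) • m = 0 → s = 0) :=
  bond_normal_element_annihilators_general hnoeth hprimeα hprimeβ htfL htfR m hm hnormal
end

section
/- Let R be a noetherian ring, P_α and P_β prime ideals of R, and N an (R/P_α, R/P_β)-bimodule, finitely generated and torsionfree on each side (a bond). Suppose there exist a ring automorphism σ of R and a nonzero element n ∈ N such that r·n = n·σ(r) for all r ∈ R. Then σ(P_α) = P_β. -/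
open MulOpposite

section GoldieAux

variable {S : Type*} [Ring S]

def rannOp (a : S) : Ideal Sᵐᵒᵖ where
  carrier := {t | a * t.unop = 0}
  add_mem' := by
    intro x y hx hy
    simp only [Set.mem_setOf_eq, unop_add, mul_add] at *
    rw [hx, hy, add_zero]
  zero_mem' := by simp
  smul_mem' := by
    intro r x hx
    simp only [Set.mem_setOf_eq, smul_eq_mul, unop_mul, ← mul_assoc] at *
    rw [hx, zero_mul]

lemma mem_rannOp {a : S} {t : Sᵐᵒᵖ} : t ∈ rannOp a ↔ a * t.unop = 0 := Iff.rfl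

lemma op_mem_rannOp {a x : S} : op x ∈ rannOp a ↔ a * x = 0 := Iff.rfl

lemma exists_max_rann [IsNoetherianRing Sᵐᵒᵖ] (V : Set S) (hV : V.Nonempty) :
    ∃ a ∈ V, ∀ b ∈ V, rannOp a ≤ rannOp b → rannOp b = rannOp a := by
  obtain ⟨L, hL, hmax⟩ :=
    set_has_maximal_iff_noetherian.mpr (inferInstance : IsNoetherian Sᵐᵒᵖ Sᵐᵒᵖ)
      (rannOp '' V) (hV.image _)
  obtain ⟨a, haV, rfl⟩ := hL
  refine ⟨a, haV, fun b hb hle => ?_⟩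
  rcases hle.lt_or_eq with h | h
  · exact absurd h (hmax _ ⟨b, hb, rfl⟩)
  · exact h.symm

private lemma pow_shift (w s : S) (m : ℕ) : (w * s) ^ m * w = w * (s * w) ^ m := by
  induction m with
  | zero => simp
  | succ m ih =>
    calc (w * s) ^ (m + 1) * w = (w * s) ^ m * (w * (s * w)) := by
          rw [pow_succ, mul_assoc, mul_assoc]
      _ = (w * (s * w) ^ m) * (s * w) := by rw [← mul_assoc, ih]
      _ = w * (s * w) ^ (m + 1) := by rw [mul_assoc, ← pow_succ]

lemma exists_not_nilpotent [IsNoetherianRing Sᵐᵒᵖ]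
    (hpr : ∀ a b : S, (∀ x, a * x * b = 0) → a = 0 ∨ b = 0)
    (K : S → Prop) (hKr : ∀ x s, K x → K (x * s))
    (x₀ : S) (hx₀ : K x₀) (hx₀0 : x₀ ≠ 0) :
    ∃ z, K z ∧ ∀ m : ℕ, z ^ (m + 1) ≠ 0 := by
  have hsemi : ∀ a : S, (∀ x, a * x * a = 0) → a = 0 := fun a h => (hpr a a h).elim id id
  obtain ⟨x, ⟨hxK, hx0⟩, hmax⟩ :=
    exists_max_rann {x : S | K x ∧ x ≠ 0} ⟨x₀, hx₀, hx₀0⟩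
  -- core argument for square-zero elements with maximal right annihilator
  have core : ∀ w : S, K w → w ≠ 0 → w * w = 0 →
      (∀ b ∈ {x : S | K x ∧ x ≠ 0}, rannOp w ≤ rannOp b → rannOp b = rannOp w) →
      ∃ z, K z ∧ ∀ m : ℕ, z ^ (m + 1) ≠ 0 := by
    intro w hwK hw0 hww hwmax
    obtain ⟨s, hs⟩ : ∃ s, w * s * w ≠ 0 := by
      by_contra h; push_neg at h; exact hw0 (hsemi w h)
    have hyV : (w * s * w) ∈ {x : S | K x ∧ x ≠ 0} :=
      ⟨by simpa [mul_assoc] using hKr w (s * w) hwK, hs⟩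
    have hle : rannOp w ≤ rannOp (w * s * w) := by
      intro t ht
      rw [mem_rannOp] at *
      rw [mul_assoc, mul_assoc, ht, mul_zero, mul_zero]
    have heq := hwmax _ hyV hle
    have key : ∀ m : ℕ, w * (s * w) ^ m ≠ 0 := by
      intro m
      induction m with
      | zero => simpa
      | succ m ih =>
        have h1 : op ((s * w) ^ m) ∉ rannOp w := by
          rw [op_mem_rannOp]; exact ih
        rw [← heq] at h1
        intro h
        apply h1
        rw [op_mem_rannOp]
        calc w * s * w * (s * w) ^ m = w * (s * w * (s * w) ^ m) := by
              rw [mul_assoc, mul_assoc, ← mul_assoc s w]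
          _ = w * (s * w) ^ (m + 1) := by rw [← pow_succ']
          _ = 0 := h
    refine ⟨w * s, hKr _ _ hwK, fun m h => key (m + 1) ?_⟩
    rw [← pow_shift] at *
    rw [h, zero_mul]
  by_cases hnil : ∀ m : ℕ, x ^ (m + 1) ≠ 0
  · exact ⟨x, hxK, hnil⟩
  · push_neg at hnil
    obtain ⟨m, hm⟩ := hnil
    -- minimal k with x ^ k = 0
    have hex : ∃ k, x ^ k = 0 := ⟨m + 1, hm⟩
    classical
    obtain ⟨k, hxk, hmin⟩ : ∃ k, x ^ k = 0 ∧ ∀ j < k, x ^ j ≠ 0 :=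
      ⟨Nat.find hex, Nat.find_spec hex, fun j hj => Nat.find_min hex hj⟩
    have hk2 : 2 ≤ k := by
      by_contra hc
      push_neg at hc
      interval_cases k
      · rw [pow_zero] at hxk
        exact hx0 (by rw [← mul_one x, hxk, mul_zero])
      · rw [pow_one] at hxk
        exact hx0 hxk
    set w := x ^ (k - 1) with hw
    have hw0 : w ≠ 0 := hmin (k - 1) (by omega)
    have hwK : K w := by
      have : w = x * x ^ (k - 2) := by
        rw [hw, ← pow_succ']
        congr 1
        omega
      rw [this]; exact hKr _ _ hxK
    have hww : w * w = 0 := by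
      rw [hw, ← pow_add]
      have : k - 1 + (k - 1) = k + (k - 2) := by omega
      rw [this, pow_add, hxk, zero_mul]
    have hlew : rannOp x ≤ rannOp w := by
      intro t ht
      rw [mem_rannOp] at *
      have : w = x ^ (k - 2) * x := by rw [hw, ← pow_succ]; congr 1; omega
      rw [this, mul_assoc, ht, mul_zero]
    have heqw := hmax w ⟨hwK, hw0⟩ hlew
    exact core w hwK hw0 hww (fun b hb hle => by
      rw [heqw] at hle
      rw [heqw]
      exact hmax b hb hle)

lemma exists_good [IsNoetherianRing Sᵐᵒᵖ]
    (hpr : ∀ a b : S, (∀ x, a * x * b = 0) → a = 0 ∨ b = 0)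
    (K : S → Prop) (hKr : ∀ x s, K x → K (x * s))
    (x₀ : S) (hx₀ : K x₀) (hx₀0 : x₀ ≠ 0) :
    ∃ a, K a ∧ a ≠ 0 ∧ ∀ t, a * (a * t) = 0 → a * t = 0 := by
  obtain ⟨z, hzK, hz⟩ := exists_not_nilpotent hpr K hKr x₀ hx₀ hx₀0
  obtain ⟨a, ⟨m, rfl⟩, hmax⟩ :=
    exists_max_rann (Set.range fun m : ℕ => z ^ (m + 1)) ⟨z, 0, by simp⟩
  have hle : rannOp (z ^ (m + 1)) ≤ rannOp (z ^ (2 * m + 2)) := by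
    intro t ht
    rw [mem_rannOp] at *
    have : z ^ (2 * m + 2) = z ^ (m + 1) * z ^ (m + 1) := by rw [← pow_add]; congr 1; omega
    rw [this, mul_assoc, ht, mul_zero]
  have heq := hmax _ ⟨2 * m + 1, by norm_num⟩ hle
  refine ⟨z ^ (m + 1), ?_, hz m, fun t h => ?_⟩
  · have : z ^ (m + 1) = z * z ^ m := by rw [← pow_succ']
    rw [this]; exact hKr _ _ hzK
  · have h2 : z ^ (2 * m + 2) * t = 0 := by
      have : z ^ (2 * m + 2) = z ^ (m + 1) * z ^ (m + 1) := by rw [← pow_add]; congr 1; omega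
      rw [this, mul_assoc]; exact h
    have := (op_mem_rannOp).mpr h2
    rw [heq, op_mem_rannOp] at this
    exact this

end GoldieAux

section Goldie

variable {S : Type*} [Ring S]

lemma dir_sum {m : ℕ} (a : Fin m → S)
    (h3 : ∀ i j : Fin m, i < j → a i * a j = 0)
    (h4 : ∀ (i : Fin m) (t : S), a i * (a i * t) = 0 → a i * t = 0)
    (t : Fin m → S) (ht : ∑ i, a i * t i = 0) : ∀ i, a i * t i = 0 := by
  induction m with
  | zero => exact fun i => i.elim0
  | succ m ih =>
    rw [Fin.sum_univ_succ] at ht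
    have h0 : a 0 * t 0 = 0 := by
      apply h4 0
      have h5 : a 0 * (a 0 * t 0 + ∑ i : Fin m, a i.succ * t i.succ) = 0 := by
        rw [ht, mul_zero]
      rw [mul_add, Finset.mul_sum] at h5
      have hz : ∀ i : Fin m, a 0 * (a i.succ * t i.succ) = 0 := fun i => by
        rw [← mul_assoc, h3 0 i.succ (Fin.succ_pos i), zero_mul]
      rw [Finset.sum_congr rfl (fun i _ => hz i), Finset.sum_const_zero, add_zero] at h5
      exact h5
    have htail : ∑ i : Fin m, a i.succ * t i.succ = 0 := by
      rw [h0, zero_add] at ht; exact ht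
    refine Fin.cases h0 ?_
    exact ih (fun i => a i.succ)
      (fun i j hij => h3 i.succ j.succ (Fin.succ_lt_succ_iff.mpr hij))
      (fun i u => h4 i.succ u) (fun i => t i.succ) htail

theorem exists_regular_in_ideal [IsNoetherianRing Sᵐᵒᵖ]
    (hpr : ∀ a b : S, (∀ x, a * x * b = 0) → a = 0 ∨ b = 0)
    (I : S → Prop) (hI0 : I 0) (hIadd : ∀ a b, I a → I b → I (a + b))
    (hIl : ∀ a s, I a → I (s * a)) (hIr : ∀ a s, I a → I (a * s))
    (b₀ : S) (hb₀ : I b₀) (hb₀0 : b₀ ≠ 0) :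
    ∃ c, I c ∧ (∀ x, c * x = 0 → x = 0) ∧ (∀ x, x * c = 0 → x = 0) := by
  classical
  have hsemi : ∀ a : S, (∀ x, a * x * a = 0) → a = 0 := fun a h => (hpr a a h).elim id id
  -- `I` is essential as a right ideal
  have hEss : ∀ y : S, y ≠ 0 → ∃ s, y * s ≠ 0 ∧ I (y * s) := by
    intro y hy
    obtain ⟨x, hx⟩ : ∃ x, y * x * b₀ ≠ 0 := by
      by_contra h; push_neg at h
      rcases hpr y b₀ h with h' | h'
      · exact hy h'
      · exact hb₀0 h'
    exact ⟨x * b₀, by rwa [← mul_assoc], hIl _ y (hIl b₀ x hb₀)⟩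
  -- admissible sequences and their spans
  have hdir : ∀ (m : ℕ) (a : Fin m → S),
      (∀ i j, i < j → a i * a j = 0) → (∀ i t, a i * (a i * t) = 0 → a i * t = 0) →
      ∀ t : Fin m → S, (∑ i, a i * t i) = 0 → ∀ i, a i * t i = 0 :=
    fun m a h3 h4 t ht => dir_sum a h3 h4 t ht
  set T : Set (Ideal Sᵐᵒᵖ) := {L | ∃ (m : ℕ) (a : Fin m → S),
    ((∀ i, a i ≠ 0) ∧ (∀ i, I (a i)) ∧ (∀ i j, i < j → a i * a j = 0) ∧
      (∀ i t, a i * (a i * t) = 0 → a i * t = 0)) ∧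
    L = Submodule.span Sᵐᵒᵖ (Set.range fun i => op (a i))} with hT
  obtain ⟨a₁, ha₁I, ha₁0, ha₁⟩ := exists_good hpr I (fun x s hx => hIr x s hx) b₀ hb₀ hb₀0
  have hTne : T.Nonempty := by
    refine ⟨_, 1, fun _ => a₁, ⟨fun _ => ha₁0, fun _ => ha₁I, fun i j hij => ?_,
      fun _ t h => ha₁ t h⟩, rfl⟩
    · exact absurd (Subsingleton.elim i j ▸ hij) (lt_irrefl j)
  obtain ⟨L₀, hL₀T, hmaxL⟩ := set_has_maximal_iff_noetherian.mpr
    (inferInstance : IsNoetherian Sᵐᵒᵖ Sᵐᵒᵖ) T hTne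
  obtain ⟨m, a, ⟨hA1, hA2, hA3, hA4⟩, rfl⟩ := hL₀T
  -- the intersection of the right annihilators of the `a i` with `I` is zero
  have hK' : ∀ x, I x → (∀ i, a i * x = 0) → x = 0 := by
    intro x hxI hax
    by_contra hx0
    obtain ⟨a', ⟨ha'I, ha'ann⟩, ha'0, ha'good⟩ := exists_good hpr
      (fun y => I y ∧ ∀ i, a i * y = 0)
      (fun y s hy => ⟨hIr y s hy.1, fun i => by rw [← mul_assoc, hy.2 i, zero_mul]⟩)
      x ⟨hxI, hax⟩ hx0
    set b : Fin (m + 1) → S := Fin.snoc a a' with hb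
    have hb1 : ∀ i, b i ≠ 0 := by
      intro i
      induction i using Fin.lastCases with
      | last => rw [hb]; simpa [Fin.snoc_last] using ha'0
      | cast i => rw [hb]; simpa [Fin.snoc_castSucc] using hA1 i
    have hb2 : ∀ i, I (b i) := by
      intro i
      induction i using Fin.lastCases with
      | last => rw [hb]; simpa [Fin.snoc_last] using ha'I
      | cast i => rw [hb]; simpa [Fin.snoc_castSucc] using hA2 i
    have hb3 : ∀ i j, i < j → b i * b j = 0 := by
      intro i j hij
      induction j using Fin.lastCases with
      | last =>
        obtain ⟨i', rfl⟩ := Fin.exists_castSucc_eq.mpr (Fin.ne_last_of_lt hij)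
        rw [hb]; rw [Fin.snoc_castSucc, Fin.snoc_last]; exact ha'ann i'
      | cast j =>
        obtain ⟨i', rfl⟩ := Fin.exists_castSucc_eq.mpr
          (Fin.ne_last_of_lt (hij.trans (Fin.castSucc_lt_last j)))
        rw [hb]; rw [Fin.snoc_castSucc, Fin.snoc_castSucc]
        exact hA3 i' j (Fin.castSucc_lt_castSucc_iff.mp hij)
    have hb4 : ∀ i t, b i * (b i * t) = 0 → b i * t = 0 := by
      intro i
      induction i using Fin.lastCases with
      | last => rw [hb]; simpa [Fin.snoc_last] using ha'good
      | cast i => rw [hb]; simpa [Fin.snoc_castSucc] using hA4 i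
    have hmem' : op a' ∉ Submodule.span Sᵐᵒᵖ (Set.range fun i => op (a i)) := by
      intro hmem
      obtain ⟨f, hf⟩ := (Submodule.mem_span_range_iff_exists_fun _).mp hmem
      have ha'eq : ∑ i, a i * (f i).unop = a' := by
        calc ∑ i, a i * (f i).unop = ∑ i, (f i • op (a i)).unop := by
              refine Finset.sum_congr rfl fun i _ => ?_
              rw [smul_eq_mul, unop_mul, unop_op]
          _ = (∑ i, f i • op (a i)).unop := (Finset.unop_sum _ _).symm
          _ = a' := by rw [hf, unop_op]
      have hz : ∑ i : Fin (m + 1), b i * (Fin.snoc (fun i => (f i).unop) (-1) : Fin (m+1) → S) i = 0 := by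
        rw [Fin.sum_univ_castSucc]
        have h1 : ∀ i : Fin m, b i.castSucc *
            (Fin.snoc (fun i => (f i).unop) (-1) : Fin (m+1) → S) i.castSucc
            = a i * (f i).unop := by
          intro i; rw [hb, Fin.snoc_castSucc, Fin.snoc_castSucc]
        rw [Finset.sum_congr rfl (fun i _ => h1 i), ha'eq, hb]
        rw [Fin.snoc_last, Fin.snoc_last, mul_neg_one, add_neg_cancel]
      have := hdir (m + 1) b hb3 hb4 _ hz (Fin.last m)
      rw [hb, Fin.snoc_last, Fin.snoc_last, mul_neg_one, neg_eq_zero] at this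
      exact ha'0 this
    have hlt : Submodule.span Sᵐᵒᵖ (Set.range fun i => op (a i)) <
        Submodule.span Sᵐᵒᵖ (Set.range fun i : Fin (m+1) => op (b i)) := by
      refine lt_of_le_of_ne (Submodule.span_mono ?_) fun hEq => hmem' ?_
      · rintro _ ⟨i, rfl⟩
        exact ⟨i.castSucc, by simp [hb, Fin.snoc_castSucc]⟩
      · rw [hEq]
        exact Submodule.subset_span ⟨Fin.last m, by simp [hb, Fin.snoc_last]⟩
    exact hmaxL _ ⟨m + 1, b, ⟨hb1, hb2, hb3, hb4⟩, rfl⟩ hlt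
  set c : S := ∑ i, a i with hc
  have hcI : I c := Finset.sum_induction _ I (fun u v hu hv => hIadd u v hu hv) hI0
    (fun i _ => hA2 i)
  have hrann : ∀ x, c * x = 0 → x = 0 := by
    intro x hx
    by_contra hx0
    have hterms : ∀ i, a i * x = 0 :=
      hdir m a hA3 hA4 (fun _ => x) (by rwa [← Finset.sum_mul])
    obtain ⟨s, hs0, hsI⟩ := hEss x hx0
    refine hs0 (hK' (x * s) hsI fun i => ?_)
    rw [← mul_assoc, hterms i, zero_mul]
  -- `cS` is an essential right ideal
  have hcess : ∀ y : S, y ≠ 0 → ∃ s, y * s ≠ 0 ∧ ∃ u, y * s = c * u := by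
    intro y hy
    by_contra hcon
    push_neg at hcon
    have hy' : ∀ s u, y * s = c * u → y * s = 0 := by
      intro s u h
      by_contra h0
      exact hcon s h0 u h
    have dir2 : ∀ (mm : ℕ) (t : Fin mm → S),
        (∑ i : Fin mm, c ^ (i : ℕ) * (y * t i)) = 0 → ∀ i, y * t i = 0 := by
      intro mm
      induction mm with
      | zero => exact fun t _ i => i.elim0
      | succ mm ih =>
        intro t ht
        rw [Fin.sum_univ_succ] at ht
        have hterm : ∀ i : Fin mm, c ^ ((i.succ : Fin (mm + 1)) : ℕ) * (y * t i.succ)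
            = c * (c ^ (i : ℕ) * (y * t i.succ)) := by
          intro i; rw [Fin.val_succ, pow_succ', mul_assoc]
        rw [Finset.sum_congr rfl (fun i _ => hterm i), ← Finset.mul_sum] at ht
        simp only [Fin.val_zero, pow_zero, one_mul] at ht
        have h0 : y * t 0 = 0 := by
          refine hy' (t 0) (-(∑ i : Fin mm, c ^ (i : ℕ) * (y * t i.succ))) ?_
          rw [mul_neg]
          exact eq_neg_of_add_eq_zero_left ht
        have hB : (∑ i : Fin mm, c ^ (i : ℕ) * (y * t i.succ)) = 0 := by
          apply hrann
          rw [h0, zero_add] at ht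
          exact ht
        refine Fin.cases h0 ?_
        exact ih (fun j => t j.succ) hB
    set J : ℕ → Ideal Sᵐᵒᵖ := fun k =>
      Submodule.span Sᵐᵒᵖ (Set.range fun i : Fin (k + 1) => op (c ^ (i : ℕ) * y)) with hJ
    obtain ⟨L, hLmem, hmaxJ⟩ := set_has_maximal_iff_noetherian.mpr
      (inferInstance : IsNoetherian Sᵐᵒᵖ Sᵐᵒᵖ) (Set.range J) ⟨J 0, 0, rfl⟩
    obtain ⟨k, rfl⟩ := hLmem
    have hsub : J k ≤ J (k + 1) := by
      rw [hJ]
      refine Submodule.span_mono ?_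
      rintro _ ⟨i, rfl⟩
      exact ⟨⟨i.1, by omega⟩, rfl⟩
    have heqJ : J (k + 1) = J k := by
      rcases hsub.lt_or_eq with h | h
      · exact absurd h (hmaxJ _ ⟨k + 1, rfl⟩)
      · exact h.symm
    have hmem : op (c ^ (k + 1) * y) ∈ J k := by
      rw [← heqJ, hJ]
      exact Submodule.subset_span ⟨Fin.last (k + 1), by simp⟩
    rw [hJ] at hmem
    obtain ⟨f, hf⟩ := (Submodule.mem_span_range_iff_exists_fun _).mp hmem
    have hfe : ∑ i : Fin (k + 1), c ^ (i : ℕ) * (y * (f i).unop) = c ^ (k + 1) * y := by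
      calc ∑ i : Fin (k + 1), c ^ (i : ℕ) * (y * (f i).unop)
          = ∑ i : Fin (k + 1), (f i • op (c ^ (i : ℕ) * y)).unop := by
            refine Finset.sum_congr rfl fun i _ => ?_
            rw [smul_eq_mul, unop_mul, unop_op, mul_assoc]
        _ = (∑ i : Fin (k + 1), f i • op (c ^ (i : ℕ) * y)).unop := (Finset.unop_sum _ _).symm
        _ = c ^ (k + 1) * y := by rw [hf, unop_op]
    set t' : Fin (k + 2) → S := Fin.snoc (fun i => (f i).unop) (-1) with ht'
    have hzero : ∑ i : Fin (k + 2), c ^ (i : ℕ) * (y * t' i) = 0 := by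
      rw [Fin.sum_univ_castSucc]
      have h1 : ∀ i : Fin (k + 1), c ^ ((i.castSucc : Fin (k + 2)) : ℕ) * (y * t' i.castSucc)
          = c ^ (i : ℕ) * (y * (f i).unop) := by
        intro i; rw [Fin.coe_castSucc, ht', Fin.snoc_castSucc]
      rw [Finset.sum_congr rfl (fun i _ => h1 i), hfe, ht', Fin.snoc_last, Fin.val_last,
        mul_neg_one, mul_neg, add_neg_cancel]
    have hlast := dir2 (k + 2) t' hzero (Fin.last (k + 1))
    rw [ht', Fin.snoc_last, mul_neg_one, neg_eq_zero] at hlast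
    exact hy hlast
  -- right singular argument: `lann c = 0`
  have hlann : ∀ x, x * c = 0 → x = 0 := by
    have hW0 : ∀ x : S, (∀ y : S, y ≠ 0 → ∃ s, y * s ≠ 0 ∧ x * (y * s) = 0) → x = 0 := by
      intro x₁ hx₁
      by_contra hx₁0
      set W : S → Prop := fun x => ∀ y : S, y ≠ 0 → ∃ s, y * s ≠ 0 ∧ x * (y * s) = 0 with hWdef
      obtain ⟨a₂, ⟨hWa, ha0⟩, hmaxW⟩ := exists_max_rann {x | W x ∧ x ≠ 0} ⟨x₁, hx₁, hx₁0⟩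
      have Wr : ∀ x s, W x → W (x * s) := by
        intro x s hx y hy
        by_cases hsy : s * y = 0
        · exact ⟨1, by rwa [mul_one], by rw [mul_one, mul_assoc, hsy, mul_zero]⟩
        · obtain ⟨u, hu0, hu⟩ := hx (s * y) hsy
          refine ⟨u, fun h => hu0 ?_, ?_⟩
          · rw [mul_assoc, h, mul_zero]
          · rw [mul_assoc x s, ← mul_assoc s y u]
            exact hu
      have Wl : ∀ x s, W x → W (s * x) := by
        intro x s hx y hy
        obtain ⟨u, hu0, hu⟩ := hx y hy
        exact ⟨u, hu0, by rw [mul_assoc, hu, mul_zero]⟩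
      have hza : ∀ z, W z → z * a₂ = 0 := by
        intro z hz
        by_contra hza0
        have hWza : (z * a₂) ∈ {x | W x ∧ x ≠ 0} := ⟨Wl a₂ z hWa, hza0⟩
        have hle2 : rannOp a₂ ≤ rannOp (z * a₂) := fun t ht => by
          rw [mem_rannOp] at *
          rw [mul_assoc, ht, mul_zero]
        have heq2 := hmaxW _ hWza hle2
        obtain ⟨s, hs0, hs⟩ := hz a₂ ha0
        apply hs0
        have hmem2 : op s ∈ rannOp (z * a₂) := by
          rw [op_mem_rannOp, mul_assoc]; exact hs
        rw [heq2, op_mem_rannOp] at hmem2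
        exact hmem2
      refine ha0 (hsemi a₂ fun s => ?_)
      exact hza (a₂ * s) (Wr a₂ s hWa)
    intro x hxc
    refine hW0 x fun y hy => ?_
    obtain ⟨s, hs0, u, hu⟩ := hcess y hy
    exact ⟨s, hs0, by rw [hu, ← mul_assoc, hxc, zero_mul]⟩
  exact ⟨c, hcI, hrann, hlann⟩

end Goldie

section Transfer

theorem exists_regular_mod {R : Type*} [Ring R] (hnoe : IsNoetherianRing Rᵐᵒᵖ)
    (P : TwoSidedIdeal R) (hproper : P ≠ ⊤)
    (hprime : ∀ a b : R, (∀ x : R, a * x * b ∈ P) → a ∈ P ∨ b ∈ P)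
    (D : R → Prop) (hD0 : D 0) (hDadd : ∀ a b, D a → D b → D (a + b))
    (hDl : ∀ a s, D a → D (s * a)) (hDr : ∀ a s, D a → D (a * s))
    (b₀ : R) (hb₀D : D b₀) (hb₀P : b₀ ∉ P) :
    ∃ c, D c ∧ (∀ x, c * x ∈ P → x ∈ P) ∧ (∀ x, x * c ∈ P → x ∈ P) := by
  classical
  let S := P.ringCon.Quotient
  let π : R →+* S := P.ringCon.mk'
  have hπs : Function.Surjective π := fun y => Quot.inductionOn y fun r => ⟨r, rfl⟩
  have hker : ∀ r : R, π r = 0 ↔ r ∈ P := by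
    intro r
    show (r : S) = ((0 : R) : S) ↔ r ∈ P
    rw [RingCon.eq, P.rel_iff, sub_zero]
  -- Noetherian on the right
  have : IsNoetherianRing Sᵐᵒᵖ := by
    refine isNoetherianRing_of_surjective Rᵐᵒᵖ Sᵐᵒᵖ (RingHom.op π) ?_
    intro y
    obtain ⟨r, hr⟩ := hπs y.unop
    exact ⟨op r, by simp [RingHom.op, hr]⟩
  -- primality descends
  have hpr : ∀ a b : S, (∀ x, a * x * b = 0) → a = 0 ∨ b = 0 := by
    intro a b h
    obtain ⟨a', rfl⟩ := hπs a
    obtain ⟨b', rfl⟩ := hπs b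
    rcases hprime a' b' (fun x => by
      rw [← hker, map_mul, map_mul]
      exact h (π x)) with h' | h'
    · exact Or.inl ((hker a').mpr h')
    · exact Or.inr ((hker b').mpr h')
  -- the image ideal
  set Iq : S → Prop := fun y => ∃ r : R, π r = y ∧ D r with hIq
  obtain ⟨c, hcI, hc1, hc2⟩ := exists_regular_in_ideal hpr Iq
    ⟨0, map_zero π, hD0⟩
    (fun u v ⟨r, hr, hDr'⟩ ⟨r', hr', hDr''⟩ =>
      ⟨r + r', by rw [map_add, hr, hr'], hDadd _ _ hDr' hDr''⟩)
    (fun u s ⟨r, hr, hDr'⟩ => by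
      obtain ⟨s', rfl⟩ := hπs s
      exact ⟨s' * r, by rw [map_mul, hr], hDl _ _ hDr'⟩)
    (fun u s ⟨r, hr, hDr'⟩ => by
      obtain ⟨s', rfl⟩ := hπs s
      exact ⟨r * s', by rw [map_mul, hr], hDr _ _ hDr'⟩)
    (π b₀) ⟨b₀, rfl, hb₀D⟩ (fun h => hb₀P ((hker b₀).mp h))
  obtain ⟨c₀, hc₀, hc₀D⟩ := hcI
  refine ⟨c₀, hc₀D, fun x hx => ?_, fun x hx => ?_⟩
  · rw [← hker] at hx ⊢
    rw [map_mul, hc₀] at hx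
    exact hc1 _ hx
  · rw [← hker] at hx ⊢
    rw [map_mul, hc₀] at hx
    exact hc2 _ hx

end Transfer

/-- let `R` be a noetherian ring, `Pα`, `Pβ` prime (two-sided) ideals, and `N`
an `(R/Pα, R/Pβ)`-bimodule, finitely generated and torsionfree on each side (a bond),
modelled as an `R`-bimodule killed by `Pα` on the left and by `Pβ` on the right.  If `σ` is
a ring automorphism of `R` and `n ∈ N` is nonzero with `r·n = n·σ(r)` for all `r`, then
`σ(Pα) = Pβ`. -/
theorem bond_with_automorphism_twist {R N : Type*} [Ring R]
    [AddCommGroup N] [Module R N] [Module Rᵐᵒᵖ N] [SMulCommClass R Rᵐᵒᵖ N]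
    (hnoeth : IsNoetherianRing R ∧ IsNoetherianRing Rᵐᵒᵖ)
    (Pα Pβ : TwoSidedIdeal R)
    -- `Pα` and `Pβ` are prime ideals
    (hPαproper : Pα ≠ ⊤) (hPβproper : Pβ ≠ ⊤)
    (hPαprime : ∀ a b : R, (∀ x : R, a * x * b ∈ Pα) → a ∈ Pα ∨ b ∈ Pα)
    (hPβprime : ∀ a b : R, (∀ x : R, a * x * b ∈ Pβ) → a ∈ Pβ ∨ b ∈ Pβ)
    -- `N` is an `(R/Pα, R/Pβ)`-bimodule
    (hkillL : ∀ a ∈ Pα, ∀ v : N, a • v = 0)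
    (hkillR : ∀ b ∈ Pβ, ∀ v : N, (op b) • v = 0)
    -- finitely generated on each side
    (hfgL : Module.Finite R N) (hfgR : Module.Finite Rᵐᵒᵖ N)
    -- torsionfree on each side: no nonzero element is annihilated by an element
    -- regular modulo `Pα` on the left, or regular modulo `Pβ` on the right
    (htfL : ∀ r : R, ((∀ x : R, r * x ∈ Pα → x ∈ Pα) ∧ (∀ x : R, x * r ∈ Pα → x ∈ Pα)) →
      ∀ v : N, r • v = 0 → v = 0)
    (htfR : ∀ s : R, ((∀ x : R, s * x ∈ Pβ → x ∈ Pβ) ∧ (∀ x : R, x * s ∈ Pβ → x ∈ Pβ)) →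
      ∀ v : N, (op s) • v = 0 → v = 0)
    (σ : R ≃+* R) (n : N) (hn : n ≠ 0)
    (htwist : ∀ r : R, r • n = (op (σ r)) • n) :
    ∀ r : R, r ∈ Pα ↔ σ r ∈ Pβ := by
  obtain ⟨-, hR⟩ := hnoeth
  haveI : SMulCommClass Rᵐᵒᵖ R N := SMulCommClass.symm R Rᵐᵒᵖ N
  have keyβ : ∀ s : R, (op s) • n = 0 → s ∈ Pβ := by
    intro s hs
    by_contra hsP
    obtain ⟨c, hcD, hc1, hc2⟩ := exists_regular_mod hR Pβ hPβproper hPβprime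
      (fun r => (op r) • n = 0)
      (by simp)
      (fun a b ha hb => by
        show (op (a + b)) • n = 0
        rw [op_add, add_smul, ha, hb, add_zero])
      (fun a s' ha => by
        show (op (s' * a)) • n = 0
        have h1 : (op s') • n = (σ.symm s') • n := by
          rw [htwist (σ.symm s'), RingEquiv.apply_symm_apply]
        rw [op_mul, mul_smul, h1, smul_comm (op a) (σ.symm s') n, ha, smul_zero])
      (fun a s' ha => by
        show (op (a * s')) • n = 0
        rw [op_mul, mul_smul, ha, smul_zero])
      s hs hsP
    exact hn (htfR c ⟨hc1, hc2⟩ n hcD)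
  have keyα : ∀ r : R, r • n = 0 → r ∈ Pα := by
    intro r hr
    by_contra hrP
    obtain ⟨c, hcD, hc1, hc2⟩ := exists_regular_mod hR Pα hPαproper hPαprime
      (fun r => r • n = 0)
      (by simp)
      (fun a b ha hb => by
        show (a + b) • n = 0
        rw [add_smul, ha, hb, add_zero])
      (fun a s' ha => by
        show (s' * a) • n = 0
        rw [mul_smul, ha, smul_zero])
      (fun a s' ha => by
        show (a * s') • n = 0
        rw [mul_smul, htwist s', smul_comm a (op (σ s')) n, ha, smul_zero])
      r hr hrP
    exact hn (htfL c ⟨hc1, hc2⟩ n hcD)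
  intro r
  constructor
  · intro h
    apply keyβ
    rw [← htwist]
    exact hkillL r h n
  · intro h
    apply keyα
    rw [htwist]
    exact hkillR _ h n
end

section
/- Let R be a ring which is a finite centralizing extension of a subring U, i.e. R = U·r₀ + ⋯ + U·r_s for finitely many elements r₀, …, r_s ∈ R each of which commutes with every element of U. Then R is left noetherian if and only if U is left noetherian. -/
section Aux

variable {R : Type*} [Ring R] (U : Subring R) {M : Type*} [AddCommGroup M] [Module R M]

/-- The largest `R`-submodule contained in a `U`-submodule `V`. -/
def fcCore (V : Submodule U M) : Submodule R M where
  carrier := {x | ∀ c : R, c • x ∈ V}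
  add_mem' hx hy c := by rw [smul_add]; exact V.add_mem (hx c) (hy c)
  zero_mem' c := by rw [smul_zero]; exact V.zero_mem
  smul_mem' c x hx c' := by rw [smul_smul]; exact hx (c' * c)

theorem fcCore_le (V : Submodule U M) (x : M) (hx : x ∈ fcCore U V) : x ∈ V := by
  simpa using hx 1

theorem mem_fcCore {s : ℕ} {r : Fin (s + 1) → R}
    (hgen : ∀ x : R, ∃ a : Fin (s + 1) → U, x = ∑ i, (a i : R) * r i)
    (V : Submodule U M) (x : M) (h : ∀ i, r i • x ∈ V) : x ∈ fcCore U V := by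
  intro c
  obtain ⟨a, ha⟩ := hgen c
  rw [ha, Finset.sum_smul]
  refine Submodule.sum_mem V fun i _ => ?_
  rw [mul_smul]
  exact V.smul_mem (a i) (h i)

end Aux

section Key

variable {R : Type*} [Ring R]

/-- Multiplication by a centralizing element is `U`-linear. -/
def fcMul (U : Subring R) (s : ℕ) (r : Fin (s + 1) → R)
    (hcent : ∀ i, ∀ u ∈ U, u * r i = r i * u)
    {M : Type*} [AddCommGroup M] [Module R M] (i : Fin (s + 1)) : M →ₗ[U] M where
  toFun x := r i • x
  map_add' x y := smul_add _ _ _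
  map_smul' u x := by
    simp only [RingHom.id_apply]
    have h1 : u • x = (u : R) • x := rfl
    have h2 : u • (r i • x) = (u : R) • (r i • x) := rfl
    rw [h1, h2, smul_smul, smul_smul, hcent i u u.2]

/-- Formanek–Jategaonkar: a Noetherian module over a finite centralizing extension is
Noetherian over the base ring. -/
theorem fcKey (U : Subring R) (s : ℕ) (r : Fin (s + 1) → R)
    (hcent : ∀ i, ∀ u ∈ U, u * r i = r i * u)
    (hgen : ∀ x : R, ∃ a : Fin (s + 1) → U, x = ∑ i, (a i : R) * r i)
    {M : Type*} [AddCommGroup M] [Module R M] (hM : IsNoetherian R M) :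
    IsNoetherian U M := by
  haveI := hM
  have key : ∀ N : Submodule R M, IsNoetherian U (M ⧸ N) := by
    intro N
    induction N using IsNoetherian.induction with
    | _ N ih =>
    -- every quotient of M ⧸ N by a nonzero R-submodule is U-noetherian
    have h2 : ∀ K : Submodule R (M ⧸ N), K ≠ ⊥ → IsNoetherian U ((M ⧸ N) ⧸ K) := by
      intro K hK
      have hmapJ : Submodule.map N.mkQ (Submodule.comap N.mkQ K) = K :=
        Submodule.map_comap_eq_of_surjective (Submodule.mkQ_surjective N) K
      have hNJ : N ≤ Submodule.comap N.mkQ K := by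
        intro x hx
        have hx0 : N.mkQ x = 0 := by
          rw [Submodule.mkQ_apply, Submodule.Quotient.mk_eq_zero]; exact hx
        simp [Submodule.mem_comap, hx0]
      have hNJ' : N < Submodule.comap N.mkQ K := by
        refine lt_of_le_of_ne hNJ fun h => hK ?_
        rw [← hmapJ, ← h, eq_bot_iff]
        rintro y ⟨x, hx, rfl⟩
        simp only [Submodule.mkQ_apply, Submodule.mem_bot, Submodule.Quotient.mk_eq_zero]
        exact hx
      haveI := ih _ hNJ'
      have e := Submodule.quotientQuotientEquivQuotient N _ hNJ'.le
      rw [hmapJ] at e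
      exact isNoetherian_of_linearEquiv (e.restrictScalars U).symm
    -- Zorn: a maximal U-submodule with trivial core
    have hbot : fcCore U (⊥ : Submodule U (M ⧸ N)) = ⊥ := by
      rw [eq_bot_iff]
      intro x hx
      simpa using fcCore_le U ⊥ x hx
    have hub : ∀ c ⊆ {V : Submodule U (M ⧸ N) | fcCore U V = ⊥},
        IsChain (· ≤ ·) c → ∀ y ∈ c, ∃ ub ∈ {V : Submodule U (M ⧸ N) | fcCore U V = ⊥},
          ∀ z ∈ c, z ≤ ub := by
      intro c hc hchain y hy
      refine ⟨sSup c, ?_, fun z hz => le_sSup hz⟩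
      rw [Set.mem_setOf_eq, eq_bot_iff]
      intro x hx
      choose g hgc hgm using fun i =>
        (Submodule.mem_sSup_of_directed ⟨y, hy⟩ hchain.directedOn).mp (hx (r i))
      haveI : Nonempty c := ⟨⟨y, hy⟩⟩
      haveI := Classical.decEq c
      have hdir : Directed (· ≤ ·) (fun v : c => (v : Submodule U (M ⧸ N))) :=
        directedOn_iff_directed.mp hchain.directedOn
      obtain ⟨z, hz⟩ := hdir.finset_le (Finset.univ.image fun i => (⟨g i, hgc i⟩ : c))
      have hall : ∀ i, r i • x ∈ (z : Submodule U (M ⧸ N)) := fun i =>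
        hz ⟨g i, hgc i⟩ (Finset.mem_image_of_mem _ (Finset.mem_univ i)) (hgm i)
      have hxz : x ∈ fcCore U (z : Submodule U (M ⧸ N)) := mem_fcCore U hgen _ x hall
      rw [hc z.2] at hxz
      exact hxz
    obtain ⟨V, -, hVmax⟩ := zorn_le_nonempty₀
        {V : Submodule U (M ⧸ N) | fcCore U V = ⊥} hub ⊥ hbot
    -- the quotient by V is U-noetherian
    have claim1 : IsNoetherian U ((M ⧸ N) ⧸ V) := by
      rw [← monotone_stabilizes_iff_noetherian]
      intro f
      by_cases hall : ∀ n, Submodule.comap V.mkQ (f n) = V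
      · refine ⟨0, fun m _ => ?_⟩
        rw [← Submodule.map_comap_eq_of_surjective (Submodule.mkQ_surjective V) (f 0),
          ← Submodule.map_comap_eq_of_surjective (Submodule.mkQ_surjective V) (f m),
          hall 0, hall m]
      · push_neg at hall
        obtain ⟨n₀, hn₀⟩ := hall
        have hWmono : Monotone fun n => Submodule.comap V.mkQ (f n) :=
          fun a b hab => Submodule.comap_mono (f.mono hab)
        have hVle : ∀ n, V ≤ Submodule.comap V.mkQ (f n) := by
          intro n x hx
          have hx0 : V.mkQ x = 0 := by
            rw [Submodule.mkQ_apply, Submodule.Quotient.mk_eq_zero]; exact hx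
          simp [Submodule.mem_comap, hx0]
        have hKne : fcCore U (Submodule.comap V.mkQ (f n₀)) ≠ ⊥ := by
          intro h
          exact hn₀ (le_antisymm (hVmax.2 h (hVle n₀)) (hVle n₀))
        haveI hKnoeth := h2 _ hKne
        set K := fcCore U (Submodule.comap V.mkQ (f n₀)) with hKdef
        let q : (M ⧸ N) →ₗ[U] ((M ⧸ N) ⧸ K) := K.mkQ.restrictScalars U
        have hKW : ∀ n, n₀ ≤ n → ∀ x ∈ LinearMap.ker q, x ∈ Submodule.comap V.mkQ (f n) := by
          intro n hn x hx
          have hxK : x ∈ K := by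
            rwa [LinearMap.mem_ker, LinearMap.restrictScalars_apply, Submodule.mkQ_apply,
              Submodule.Quotient.mk_eq_zero] at hx
          exact hWmono hn (fcCore_le U _ x hxK)
        have hrec : ∀ n, n₀ ≤ n →
            Submodule.comap q (Submodule.map q (Submodule.comap V.mkQ (f n)))
              = Submodule.comap V.mkQ (f n) := by
          intro n hn
          rw [Submodule.comap_map_eq]
          exact sup_eq_left.mpr fun x hx => hKW n hn x hx
        obtain ⟨m, hm⟩ := monotone_stabilizes_iff_noetherian.mpr hKnoeth
          ⟨fun n => Submodule.map q (Submodule.comap V.mkQ (f (n₀ + n))),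
            fun a b hab => Submodule.map_mono (hWmono (by omega))⟩
        refine ⟨n₀ + m, fun l hl => ?_⟩
        have h1 := hm (l - n₀) (by omega)
        change Submodule.map q (Submodule.comap V.mkQ (f (n₀ + m)))
          = Submodule.map q (Submodule.comap V.mkQ (f (n₀ + (l - n₀)))) at h1
        have hl' : n₀ + (l - n₀) = l := by omega
        rw [hl'] at h1
        have hWeq : Submodule.comap V.mkQ (f (n₀ + m)) = Submodule.comap V.mkQ (f l) := by
          rw [← hrec (n₀ + m) (by omega), ← hrec l (by omega), h1]
        rw [← Submodule.map_comap_eq_of_surjective (Submodule.mkQ_surjective V) (f (n₀ + m)),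
          ← Submodule.map_comap_eq_of_surjective (Submodule.mkQ_surjective V) (f l), hWeq]
    -- conclude via the embedding x ↦ (r i • x mod V)
    let θ : (M ⧸ N) →ₗ[U] (Fin (s + 1) → ((M ⧸ N) ⧸ V)) :=
      LinearMap.pi fun i => V.mkQ.comp (fcMul U s r hcent i)
    have hθ : Function.Injective θ := by
      rw [← LinearMap.ker_eq_bot, eq_bot_iff]
      intro x hx
      have hx' : ∀ i, r i • x ∈ V := by
        intro i
        have h := congrFun (LinearMap.mem_ker.mp hx) i
        simpa [θ, fcMul, Submodule.Quotient.mk_eq_zero] using h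
      have hxc : x ∈ fcCore U V := mem_fcCore U hgen V x hx'
      rw [hVmax.1] at hxc
      simpa using hxc
    haveI := claim1
    haveI : IsNoetherian U (Fin (s + 1) → ((M ⧸ N) ⧸ V)) := isNoetherian_pi
    exact isNoetherian_of_injective θ hθ
  haveI := key ⊥
  exact isNoetherian_of_linearEquiv
    ((Submodule.quotEquivOfEqBot (⊥ : Submodule R M) rfl).restrictScalars U)

end Key

/-- if `R = U·r₀ + ⋯ + U·r_s` is a finite centralizing extension of a subring
`U`, then `R` is left noetherian iff `U` is left noetherian. -/
theorem finite_centralizing_noetherian {R : Type*} [Ring R] (U : Subring R)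
    (s : ℕ) (r : Fin (s + 1) → R)
    (hcent : ∀ i, ∀ u ∈ U, u * r i = r i * u)
    (hgen : ∀ x : R, ∃ a : Fin (s + 1) → U, x = ∑ i, (a i : R) * r i) :
    IsNoetherianRing R ↔ IsNoetherianRing U := by
  constructor
  · intro hR
    haveI : IsNoetherian R R := hR
    haveI : IsNoetherian U R := fcKey U s r hcent hgen inferInstance
    let φ : U →ₗ[U] R :=
      { toFun := fun u => (u : R)
        map_add' := fun a b => rfl
        map_smul' := fun a b => rfl }
    exact isNoetherianRing_iff.mpr (isNoetherian_of_injective φ Subtype.val_injective)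
  · intro hU
    haveI : IsNoetherianRing U := hU
    haveI : Module.Finite U R := by
      haveI := Classical.decEq R
      refine ⟨⟨Finset.univ.image r, ?_⟩⟩
      rw [eq_top_iff]
      intro x _
      obtain ⟨a, ha⟩ := hgen x
      rw [ha]
      refine Submodule.sum_mem _ fun i _ => ?_
      have h : (a i : R) * r i = (a i) • (r i) := rfl
      rw [h]
      refine Submodule.smul_mem _ _ (Submodule.subset_span ?_)
      simp
    haveI : IsNoetherian U R := isNoetherian_of_isNoetherianRing_of_finite U R
    exact isNoetherian_of_tower U (M := R) inferInstance
end

section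
/- Let R be a finite centralizing extension of a subring U, and let P be a prime ideal of R. Then P ∩ U is a prime ideal of U. -/
/-! Write `x ∈ R` as `∑ cᵢ rᵢ` with `cᵢ ∈ U`. Since each `rᵢ` commutes with `b ∈ U`,
`a x b = ∑ (a cᵢ b) rᵢ`, so `a U b ⊆ P` already forces `a R b ⊆ P`, and primeness of `P` in `R`
gives primeness of `P ∩ U` in `U`. -/

namespace TwoSidedIdeal

variable {R : Type*} [Ring R] (P : TwoSidedIdeal R)

theorem mul_mul_mul_mem_of_commute {a b u r : R} (hrb : Commute r b) (h : a * u * b ∈ P) :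
    a * (u * r) * b ∈ P := by
  have hswap : a * (u * r) * b = a * u * b * r := by
    rw [← mul_assoc, mul_assoc _ r, hrb.eq, ← mul_assoc]
  rw [hswap]
  exact P.mul_mem_right _ _ h

theorem mul_sum_mul_mem_of_centralizing {ι : Type*} (U : Subring R) (r : ι → R)
    (hcent : ∀ i, ∀ u ∈ U, u * r i = r i * u) (s : Finset ι) (c : ι → U) {a b : R}
    (hb : b ∈ U) (hab : ∀ x : U, a * x * b ∈ P) :
    a * (∑ i ∈ s, (c i : R) * r i) * b ∈ P := by
  rw [Finset.mul_sum, Finset.sum_mul]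
  exact P.finsetSum_mem _ _ fun i _ =>
    P.mul_mul_mul_mem_of_commute (hcent i b hb).symm (hab (c i))

end TwoSidedIdeal

/-- if `R = U·r₀ + ⋯ + U·r_s` is a finite centralizing extension of a subring
`U` and `P` is a prime (two-sided) ideal of `R`, then `P ∩ U` is a prime ideal of `U`; in
particular `P ∩ U ≠ U`. -/
theorem finite_centralizing_contraction_prime {R : Type*} [Ring R] (U : Subring R)
    (s : ℕ) (r : Fin (s + 1) → R)
    (hcent : ∀ i, ∀ u ∈ U, u * r i = r i * u)
    (hgen : ∀ x : R, ∃ a : Fin (s + 1) → U, x = ∑ i, (a i : R) * r i)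
    (P : TwoSidedIdeal R) (hproper : P ≠ ⊤)
    (hprime : ∀ a b : R, (∀ x : R, a * x * b ∈ P) → a ∈ P ∨ b ∈ P) :
    (¬ ∀ u : U, (u : R) ∈ P) ∧
    (∀ a b : U, (∀ x : U, ((a : R) * x * b) ∈ P) → (a : R) ∈ P ∨ (b : R) ∈ P) := by
  refine ⟨fun hU => hproper (P.eq_top (by simpa using hU 1)), fun a b hab => ?_⟩
  refine hprime a b fun x => ?_
  obtain ⟨c, rfl⟩ := hgen x
  exact P.mul_sum_mul_mem_of_centralizing U r hcent _ c b.2 hab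
end

section
/- Let R be a finite centralizing extension of a subring U, with R = U·r₀ + ⋯ + U·r_s where each rᵢ centralizes U, and let M be a simple left U-module. Then the left U-module R ⊗_U M is semisimple of length at most s + 1, with every U-module composition factor isomorphic to M. -/
/-- Linear version of `Fin.cons` as an equivalence. -/
def myConsLinearEquiv (U M : Type*) [Ring U] [AddCommGroup M] [Module U M] (k : ℕ) :
    (M × (Fin k → M)) ≃ₗ[U] (Fin (k + 1) → M) where
  toFun p := Fin.cons p.1 p.2
  invFun v := (v 0, fun i => v i.succ)
  map_add' p q := by
    funext i
    refine Fin.cases ?_ (fun j => ?_) i <;> simp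
  map_smul' c p := by
    funext i
    refine Fin.cases ?_ (fun j => ?_) i <;> simp
  left_inv p := by simp
  right_inv v := by
    funext i
    refine Fin.cases ?_ (fun j => ?_) i <;> simp

/-- Any surjective image of a finite power of a simple module is a power of it. -/
lemma aux_power {U M : Type*} [Ring U] [AddCommGroup M] [Module U M]
    [IsSimpleModule U M] (k : ℕ) {T : Type*} [instT : AddCommGroup T]
    [instMT : Module U T] (φ : (Fin k → M) →ₗ[U] T) (hφ0 : Function.Surjective φ) :
      ∃ n : ℕ, n ≤ k ∧ Nonempty (T ≃ₗ[U] (Fin n → M)) := by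
  induction k generalizing T with
  | zero =>
    have hφ := hφ0
    have : Subsingleton T := by
      constructor
      intro a b
      obtain ⟨x, rfl⟩ := hφ a
      obtain ⟨y, rfl⟩ := hφ b
      have : x = y := Subsingleton.elim x y
      rw [this]
    exact ⟨0, le_refl 0, ⟨LinearEquiv.ofSubsingleton _ _⟩⟩
  | succ k ih =>
    have hφ := hφ0
    set e := myConsLinearEquiv U M k
    set Φ : (M × (Fin k → M)) →ₗ[U] T := φ ∘ₗ (e : (M × (Fin k → M)) →ₗ[U] (Fin (k+1) → M))
    set ψ : M →ₗ[U] T := Φ ∘ₗ LinearMap.inl U M (Fin k → M)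
    set φ' : (Fin k → M) →ₗ[U] T := Φ ∘ₗ LinearMap.inr U M (Fin k → M)
    have hsplit : ∀ t : T, ∃ (a : M) (m : Fin k → M), t = ψ a + φ' m := by
      intro t
      obtain ⟨v, rfl⟩ := hφ t
      refine ⟨v 0, fun i => v i.succ, ?_⟩
      have : φ v = Φ (v 0, fun i => v i.succ) := by
        simp only [Φ, LinearMap.comp_apply]
        congr 1
        exact (e.apply_symm_apply v).symm
      rw [this]
      have : ((v 0 : M), fun i => v i.succ) = ((v 0, 0) : M × (Fin k → M)) + (0, fun i => v i.succ) := by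
        simp
      rw [this, map_add]
      simp [ψ, φ']
    set S := LinearMap.range φ'
    set N := LinearMap.range ψ
    by_cases hNS : N ≤ S
    · -- φ' is surjective
      have hs : Function.Surjective φ' := by
        intro t
        obtain ⟨a, m, rfl⟩ := hsplit t
        have : ψ a ∈ S := hNS ⟨a, rfl⟩
        obtain ⟨m', hm'⟩ := this
        exact ⟨m' + m, by rw [map_add, hm']⟩
      obtain ⟨n, hn, he⟩ := ih φ' hs
      exact ⟨n, hn.trans (Nat.le_succ k), he⟩
    · have hK : S.comap ψ = ⊥ := by
        rcases eq_bot_or_eq_top (S.comap ψ) with h | h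
        · exact h
        · exfalso
          apply hNS
          rintro x ⟨a, rfl⟩
          have : a ∈ S.comap ψ := h ▸ Submodule.mem_top
          exact this
      have hinj : Function.Injective ψ := by
        rw [← LinearMap.ker_eq_bot]
        refine le_antisymm ?_ bot_le
        refine le_trans ?_ hK.le
        intro x hx
        simp only [LinearMap.mem_ker] at hx
        simp [Submodule.mem_comap, hx]
      have hdisj : S ⊓ N = ⊥ := by
        refine le_antisymm ?_ bot_le
        rintro x ⟨hxS, a, rfl⟩
        have : a ∈ S.comap ψ := hxS
        rw [hK] at this
        simp only [Submodule.mem_bot] at this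
        simp [this]
      have hsup : S ⊔ N = ⊤ := by
        refine le_antisymm le_top ?_
        intro t _
        obtain ⟨a, m, rfl⟩ := hsplit t
        exact Submodule.add_mem _ (Submodule.mem_sup_right ⟨a, rfl⟩)
          (Submodule.mem_sup_left ⟨m, rfl⟩)
      have hc : IsCompl S N := ⟨disjoint_iff.mpr hdisj, codisjoint_iff.mpr hsup⟩
      obtain ⟨n, hn, ⟨eS⟩⟩ := ih φ'.rangeRestrict (LinearMap.surjective_rangeRestrict φ')
      have eN : N ≃ₗ[U] M := (LinearEquiv.ofInjective ψ hinj).symm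
      refine ⟨n + 1, Nat.succ_le_succ hn, ⟨?_⟩⟩
      exact ((Submodule.prodEquivOfIsCompl S N hc).symm.trans
        ((LinearEquiv.prodCongr eS eN).trans ((LinearEquiv.prodComm U _ _).trans
          (myConsLinearEquiv U M n))))

/-- let `R` be a finite centralizing extension of `U` (via an injective ring
homomorphism `ι : U →+* R`, with centralizing module generators `r₀, …, r_s`), and let `M`
be a simple left `U`-module.  The `U`-module `R ⊗_U M` — modelled as a left `R`-module `T`
together with a `U`-linear map `f : M → T` such that every element of `T` is of the form
`∑ rᵢ • f(mᵢ)` — is semisimple of length at most `s + 1` with every composition factor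
isomorphic to `M`; equivalently, `T ≅ Mⁿ` as `U`-modules for some `n ≤ s + 1`. -/
theorem finite_centralizing_induced_module_semisimple {U R M T : Type*}
    [Ring U] [Ring R] (ι : U →+* R) (hι : Function.Injective ι)
    [AddCommGroup M] [Module U M] [IsSimpleModule U M]
    [AddCommGroup T] [Module R T] [Module U T]
    (hcompat : ∀ (u : U) (t : T), u • t = ι u • t)
    (s : ℕ) (r : Fin (s + 1) → R)
    (hcent : ∀ i, ∀ u : U, ι u * r i = r i * ι u)
    (hgen : ∀ x : R, ∃ a : Fin (s + 1) → U, x = ∑ i, ι (a i) * r i)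
    (f : M →ₗ[U] T)
    (hT : ∀ t : T, ∃ m : Fin (s + 1) → M, t = ∑ i, r i • f (m i)) :
    ∃ n : ℕ, n ≤ s + 1 ∧ Nonempty (T ≃ₗ[U] (Fin n → M)) := by
  set g : (Fin (s + 1) → M) →ₗ[U] T :=
    { toFun := fun m => ∑ i, r i • f (m i)
      map_add' := by
        intro a b
        simp [smul_add, Finset.sum_add_distrib]
      map_smul' := by
        intro u m
        simp only [RingHom.id_apply, Pi.smul_apply, map_smul]
        rw [hcompat u (∑ i, r i • f (m i)), Finset.smul_sum]
        refine Finset.sum_congr rfl fun i _ => ?_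
        rw [hcompat u (f (m i)), smul_smul, smul_smul, hcent i u] }
  have hg : Function.Surjective g := by
    intro t
    obtain ⟨m, hm⟩ := hT t
    exact ⟨m, hm.symm⟩
  exact aux_power (s + 1) g hg
end

section
/- Let R be a finite centralizing extension of a k-subalgebra U over a field k, and let ξ be a character of U. Then there are only finitely many characters of R whose restriction to U equals ξ. -/
/-!
Writing `x = ∑ aᵢ(x) rᵢ`, a character `χ` extending `ξ` satisfies `χ x = ∑ χ(rᵢ) ξ(aᵢ(x))`, so
all such characters lie in the span of the finitely many functions `x ↦ ξ(aᵢ(x))`. Distinct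
characters are linearly independent (Dedekind), hence there are only finitely many of them.
-/

section

variable {k R ι : Type*} [Field k] [Ring R] [Algebra k R] {A : Subalgebra k R} [Fintype ι]
  {r : ι → R}

theorem AlgHom.coe_eq_sum_smul_of_forall_eq (a : R → ι → A)
    (ha : ∀ x, x = ∑ i, (a x i : R) * r i) {ξ : A →ₐ[k] k} {χ : R →ₐ[k] k}
    (hχ : ∀ u : A, χ u = ξ u) :
    ⇑χ = ∑ i, χ (r i) • fun x => ξ (a x i) := by
  funext x
  calc χ x = χ (∑ i, (a x i : R) * r i) := by rw [← ha x]
    _ = ∑ i, χ (r i) * ξ (a x i) := by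
        simp only [map_sum, map_mul, hχ, mul_comm]
    _ = (∑ i, χ (r i) • fun x => ξ (a x i)) x := by
        simp only [Finset.sum_apply, Pi.smul_apply, smul_eq_mul]

theorem linearIndependent_algHom_coe :
    LinearIndependent k (fun χ : R →ₐ[k] k => (χ : R → k)) :=
  (linearIndependent_monoidHom R k).comp (fun χ : R →ₐ[k] k => (χ : R →* k))
    fun _ _ h => AlgHom.ext fun x => DFunLike.congr_fun h x

theorem Subalgebra.finite_setOf_algHom_forall_eq
    (hgen : ∀ x : R, ∃ a : ι → A, x = ∑ i, (a i : R) * r i) (ξ : A →ₐ[k] k) :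
    {χ : R →ₐ[k] k | ∀ u : A, χ u = ξ u}.Finite := by
  choose a ha using hgen
  set S := {χ : R →ₐ[k] k | ∀ u : A, χ u = ξ u}
  have hspan : Set.range (fun χ : S => ⇑χ.1) ≤
      Submodule.span k (Set.range fun i x => ξ (a x i)) := by
    rintro _ ⟨⟨χ, hχ⟩, rfl⟩
    change ⇑χ ∈ _
    rw [AlgHom.coe_eq_sum_smul_of_forall_eq a ha hχ]
    exact Submodule.sum_mem _ fun i _ => Submodule.smul_mem _ _ (Submodule.subset_span ⟨i, rfl⟩)
  have : Finite S :=
    (linearIndependent_algHom_coe.comp _ Subtype.val_injective).finite_of_le_span_finite _ _ hspan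
  exact S.toFinite

end

theorem finite_centralizing_finitely_many_characters_general {k R : Type*}
    [Field k] [Ring R] [Algebra k R] (A : Subalgebra k R)
    (s : ℕ) (r : Fin (s + 1) → R)
    (hgen : ∀ x : R, ∃ a : Fin (s + 1) → A, x = ∑ i, (a i : R) * r i)
    (ξ : A →ₐ[k] k) :
    {χ : R →ₐ[k] k | ∀ u : A, χ u = ξ u}.Finite :=
  A.finite_setOf_algHom_forall_eq hgen ξ

/-- let `R` be a finite centralizing extension of a `k`-subalgebra `A` and
`ξ` a character of `A`.  Then only finitely many characters of `R` restrict to `ξ` on `A`. -/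
theorem finite_centralizing_finitely_many_characters {k R : Type*}
    [Field k] [Ring R] [Algebra k R] (A : Subalgebra k R)
    (s : ℕ) (r : Fin (s + 1) → R)
    (hcent : ∀ i, ∀ u : A, (u : R) * r i = r i * (u : R))
    (hgen : ∀ x : R, ∃ a : Fin (s + 1) → A, x = ∑ i, (a i : R) * r i)
    (ξ : A →ₐ[k] k) :
    {χ : R →ₐ[k] k | ∀ u : A, χ u = ξ u}.Finite :=
  finite_centralizing_finitely_many_characters_general A s r hgen ξ
end

section
/- Let B be a bialgebra over a field k which is a finite centralizing extension of a subalgebra A, and let A⁺ = A ∩ ker ε be the augmentation ideal of A. Then B·A⁺ = A⁺·B, the ideal B·A⁺ is contained in ker ε, and the quotient algebra B/B·A⁺ is finite dimensional over k. -/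
/-!
Since every `a ∈ A` commutes with the generators `rᵢ`, writing `b = ∑ cᵢ rᵢ` with `cᵢ ∈ A`
turns `b a` into `∑ (cᵢ a) rᵢ` and `a b` into `∑ rᵢ (a cᵢ)`, so `B·A⁺ = A⁺·B`. Modulo `A⁺·B`,
each `a ∈ A` acts as the scalar `ε(a)`, because `a - ε(a)·1 ∈ A⁺`; hence the images of the `rᵢ`
span the quotient.
-/

namespace Subalgebra

section Semiring

variable {R B : Type*} [CommSemiring R] [Semiring B] [Bialgebra R B] (A : Subalgebra R B)

/-- `B·A⁺`, where `A⁺ = A ∩ ker ε`. -/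
def mulAugmentation : Submodule R B :=
  Submodule.span R {x : B | ∃ b a : B, a ∈ A ∧ Coalgebra.counit (R := R) a = 0 ∧ x = b * a}

/-- `A⁺·B`. -/
def augmentationMul : Submodule R B :=
  Submodule.span R {x : B | ∃ b a : B, a ∈ A ∧ Coalgebra.counit (R := R) a = 0 ∧ x = a * b}

variable {A}

theorem mul_mem_mulAugmentation (b : B) {a : B} (ha : a ∈ A)
    (ha0 : Coalgebra.counit (R := R) a = 0) : b * a ∈ A.mulAugmentation :=
  Submodule.subset_span ⟨b, a, ha, ha0, rfl⟩

theorem mul_mem_augmentationMul {a : B} (ha : a ∈ A) (ha0 : Coalgebra.counit (R := R) a = 0)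
    (b : B) : a * b ∈ A.augmentationMul :=
  Submodule.subset_span ⟨b, a, ha, ha0, rfl⟩

theorem mulAugmentation_le_ker_counit :
    A.mulAugmentation ≤ LinearMap.ker (Coalgebra.counit (R := R) (A := B)) := by
  refine Submodule.span_le.mpr ?_
  rintro _ ⟨b, a, -, ha0, rfl⟩
  simp [Bialgebra.counit_mul, ha0]

variable {ι : Type*} [Fintype ι] (r : ι → B)

theorem mulAugmentation_le_augmentationMul
    (hcent : ∀ i, ∀ u : A, (u : B) * r i = r i * u)
    (hgen : ∀ x : B, ∃ c : ι → A, x = ∑ i, (c i : B) * r i) :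
    A.mulAugmentation ≤ A.augmentationMul := by
  refine Submodule.span_le.mpr ?_
  rintro _ ⟨b, a, ha, ha0, rfl⟩
  obtain ⟨c, rfl⟩ := hgen b
  rw [Finset.sum_mul]
  refine Submodule.sum_mem _ fun i _ => ?_
  rw [mul_assoc, ← hcent i ⟨a, ha⟩, ← mul_assoc]
  exact mul_mem_augmentationMul (mul_mem (c i).2 ha)
    (by rw [Bialgebra.counit_mul, ha0, mul_zero]) _

theorem augmentationMul_le_mulAugmentation
    (hcent : ∀ i, ∀ u : A, (u : B) * r i = r i * u)
    (hgen : ∀ x : B, ∃ c : ι → A, x = ∑ i, (c i : B) * r i) :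
    A.augmentationMul ≤ A.mulAugmentation := by
  refine Submodule.span_le.mpr ?_
  rintro _ ⟨b, a, ha, ha0, rfl⟩
  obtain ⟨c, rfl⟩ := hgen b
  rw [Finset.mul_sum]
  refine Submodule.sum_mem _ fun i _ => ?_
  have hac : a * (c i : B) ∈ A := mul_mem ha (c i).2
  rw [← mul_assoc, hcent i ⟨_, hac⟩]
  exact mul_mem_mulAugmentation _ hac (by rw [Bialgebra.counit_mul, ha0, zero_mul])

theorem mulAugmentation_eq_augmentationMul
    (hcent : ∀ i, ∀ u : A, (u : B) * r i = r i * u)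
    (hgen : ∀ x : B, ∃ c : ι → A, x = ∑ i, (c i : B) * r i) :
    A.mulAugmentation = A.augmentationMul :=
  le_antisymm (mulAugmentation_le_augmentationMul r hcent hgen)
    (augmentationMul_le_mulAugmentation r hcent hgen)

end Semiring

section Ring

variable {R B : Type*} [CommRing R] [Ring B] [Bialgebra R B] {A : Subalgebra R B}

theorem mkQ_augmentationMul_mul {a : B} (ha : a ∈ A) (b : B) :
    A.augmentationMul.mkQ (a * b) = Coalgebra.counit (R := R) a • A.augmentationMul.mkQ b := by
  rw [← map_smul, Submodule.mkQ_apply, Submodule.mkQ_apply, Submodule.Quotient.eq,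
    Algebra.smul_def, ← sub_mul]
  exact mul_mem_augmentationMul (sub_mem ha (A.algebraMap_mem _))
    (by rw [map_sub, Bialgebra.counit_algebraMap, sub_self]) b

theorem finite_quotient_augmentationMul {ι : Type*} [Fintype ι] (r : ι → B)
    (hgen : ∀ x : B, ∃ c : ι → A, x = ∑ i, (c i : B) * r i) :
    Module.Finite R (B ⧸ A.augmentationMul) := by
  have hspan : Submodule.span R (Set.range (A.augmentationMul.mkQ ∘ r)) = ⊤ := by
    refine eq_top_iff.mpr fun x _ => ?_
    obtain ⟨b, rfl⟩ := A.augmentationMul.mkQ_surjective x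
    obtain ⟨c, rfl⟩ := hgen b
    simp only [map_sum, mkQ_augmentationMul_mul (c _).2]
    exact Submodule.sum_mem _ fun i _ => Submodule.smul_mem _ _ (Submodule.subset_span ⟨i, rfl⟩)
  exact ⟨hspan ▸ Submodule.fg_span (Set.finite_range _)⟩

end Ring

end Subalgebra

/-- let `B` be a bialgebra which is a finite centralizing extension of a
subalgebra `A`, and let `A⁺ = A ∩ ker ε`.  Then `B·A⁺ = A⁺·B`, the ideal `B·A⁺` is contained
in `ker ε`, and `B/B·A⁺` is finite dimensional over `k`. -/
theorem finite_centralizing_bialgebra_augmentation {k B : Type*}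
    [Field k] [Ring B] [Bialgebra k B] (A : Subalgebra k B)
    (s : ℕ) (r : Fin (s + 1) → B)
    (hcent : ∀ i, ∀ u : A, (u : B) * r i = r i * (u : B))
    (hgen : ∀ x : B, ∃ a : Fin (s + 1) → A, x = ∑ i, (a i : B) * r i) :
    Submodule.span k {x : B | ∃ b a : B, a ∈ A ∧ Coalgebra.counit (R := k) a = 0 ∧ x = b * a}
      = Submodule.span k
        {x : B | ∃ b a : B, a ∈ A ∧ Coalgebra.counit (R := k) a = 0 ∧ x = a * b} ∧
    Submodule.span k {x : B | ∃ b a : B, a ∈ A ∧ Coalgebra.counit (R := k) a = 0 ∧ x = b * a}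
      ≤ LinearMap.ker (Coalgebra.counit (R := k) (A := B)) ∧
    FiniteDimensional k
      (B ⧸ Submodule.span k
        {x : B | ∃ b a : B, a ∈ A ∧ Coalgebra.counit (R := k) a = 0 ∧ x = b * a}) := by
  have heq : A.mulAugmentation = A.augmentationMul :=
    A.mulAugmentation_eq_augmentationMul r hcent hgen
  refine ⟨heq, A.mulAugmentation_le_ker_counit, ?_⟩
  change Module.Finite k (B ⧸ A.mulAugmentation)
  rw [heq]
  exact A.finite_quotient_augmentationMul r hgen
end
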